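/- arXiv:2403.11696 — 7 statements merged into one kernel-verified Lean document; each statement's English description precedes it below -/
import Mathlib

section
/- If a sequence of measurable functions g_N : (0,1] → ℝ has a scaling profile S^{(g)} : [0,∞) → ℝ, then S^{(g)} is a continuous function on [0,∞). -/
/-!
The sublevel and superlevel sets of `S` on `[0, ∞)` are sequentially closed. Say `t n → x` and
`S (t n) ≤ c < c'` for all `n`. Along `λ_N = N ^ (-t n)`, of scale `t n`, eventually
`|g_N (λ_N)| > N ^ (-c')`. Switching from the `n`-th of these sequences to the next one late
enough gives a single sequence `λ_N = N ^ (-t (idx N))` with `idx N → ∞`; it has scale `x` and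
still satisfies `|g_N (λ_N)| ≥ N ^ (-c')` eventually, so `S x ≤ c'`.
-/

open Filter Asymptotics Topology

/-- The sequence `a` has scale not less than `s`:
for every `ε > 0`, `|a_N| = o(N^(-s+ε))` as `N → ∞`. -/
def ScaleAtLeast (a : ℕ → ℝ) (s : ℝ) : Prop :=
  ∀ ε : ℝ, 0 < ε → (fun N : ℕ => |a N|) =o[atTop] fun N : ℕ => (N : ℝ) ^ (-s + ε)

/-- The sequence `a` has scale not greater than `s`:
for every `ε > 0`, `|a_N| = ω(N^(-s-ε))` as `N → ∞`. -/
def ScaleAtMost (a : ℕ → ℝ) (s : ℝ) : Prop :=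
  ∀ ε : ℝ, 0 < ε → (fun N : ℕ => (N : ℝ) ^ (-s - ε)) =o[atTop] fun N : ℕ => |a N|

/-- The sequence `a` has scale `s`. -/
def HasScale (a : ℕ → ℝ) (s : ℝ) : Prop :=
  ScaleAtLeast a s ∧ ScaleAtMost a s

/-- The sequence of functions `g_N : (0,1] → ℝ` has scaling profile `S : [0,∞) → ℝ`:
for every sequence `λ_N ∈ (0,1]` of scale `s ≥ 0`, the sequence `|g_N (λ_N)|` has
scale `S s`. -/
def HasScalingProfile (g : ℕ → ℝ → ℝ) (S : ℝ → ℝ) : Prop :=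
  ∀ lam : ℕ → ℝ, (∀ N, lam N ∈ Set.Ioc (0 : ℝ) 1) →
    ∀ s : ℝ, 0 ≤ s → HasScale lam s → HasScale (fun N => g N (lam N)) (S s)

lemma exists_tendsto_atTop_eventually_diag {q : ℕ → ℕ → Prop} (h : ∀ n, ∀ᶠ N in atTop, q n N) :
    ∃ idx : ℕ → ℕ, Tendsto idx atTop atTop ∧ ∀ᶠ N in atTop, q (idx N) N := by
  choose M hM using fun n => eventually_atTop.mp (h n)
  -- `idx N` is the largest `n ≤ N` such that the thresholds `M 0, …, M n` are all at most `N`.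
  let P : ℕ → ℕ → Prop := fun N n => ∀ m ≤ n, M m ≤ N
  refine ⟨fun N => Nat.findGreatest (P N) N, tendsto_atTop.2 fun b => ?_, ?_⟩
  · filter_upwards [eventually_ge_atTop b, eventually_ge_atTop ((Finset.range (b + 1)).sup M)]
      with N hbN hMN
    refine Nat.le_findGreatest hbN fun m hm => le_trans ?_ hMN
    exact Finset.le_sup (Finset.mem_range.2 (Nat.lt_succ_of_le hm))
  · filter_upwards [eventually_ge_atTop (M 0)] with N hN
    have hP0 : P N 0 := fun m hm => by rwa [Nat.le_zero.1 hm]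
    have hPidx : P N (Nat.findGreatest (P N) N) := Nat.findGreatest_spec (Nat.zero_le N) hP0
    exact hM _ _ (hPidx _ le_rfl)

lemma isLittleO_natCast_rpow_of_add_le {a b : ℕ → ℝ} {δ : ℝ} (hδ : 0 < δ)
    (h : ∀ᶠ N in atTop, a N + δ ≤ b N) :
    (fun N : ℕ => (N : ℝ) ^ a N) =o[atTop] fun N : ℕ => (N : ℝ) ^ b N := by
  refine isLittleO_iff.2 fun c hc => ?_
  have hsmall : ∀ᶠ N : ℕ in atTop, (N : ℝ) ^ (-δ) < c :=
    ((tendsto_rpow_neg_atTop hδ).comp tendsto_natCast_atTop_atTop).eventually_lt_const hc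
  filter_upwards [h, hsmall, eventually_ge_atTop 1] with N hab hNc hN
  have hN1 : (1 : ℝ) ≤ N := by exact_mod_cast hN
  have hN0 : (0 : ℝ) < N := by linarith
  rw [Real.norm_of_nonneg (Real.rpow_nonneg hN0.le _),
    Real.norm_of_nonneg (Real.rpow_nonneg hN0.le _)]
  calc (N : ℝ) ^ a N ≤ (N : ℝ) ^ (-δ + b N) := Real.rpow_le_rpow_of_exponent_le hN1 (by linarith)
    _ = (N : ℝ) ^ (-δ) * (N : ℝ) ^ b N := Real.rpow_add hN0 _ _
    _ ≤ c * (N : ℝ) ^ b N := by gcongr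

section Scale

variable {a : ℕ → ℝ} {s s' : ℝ}

lemma ScaleAtLeast.eventually_lt_rpow (h : ScaleAtLeast a s) (hs : s' < s) :
    ∀ᶠ N : ℕ in atTop, |a N| < (N : ℝ) ^ (-s') := by
  have ho := h (s - s') (by linarith)
  rw [show -s + (s - s') = -s' by ring] at ho
  filter_upwards [ho.def one_half_pos, eventually_gt_atTop 0] with N hN hN0
  have hpos : 0 < (N : ℝ) ^ (-s') := Real.rpow_pos_of_pos (Nat.cast_pos.2 hN0) _
  simp only [Real.norm_eq_abs, abs_abs, abs_of_pos hpos] at hN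
  linarith

lemma ScaleAtMost.eventually_rpow_lt (h : ScaleAtMost a s) (hs : s < s') :
    ∀ᶠ N : ℕ in atTop, (N : ℝ) ^ (-s') < |a N| := by
  have ho := h (s' - s) (by linarith)
  rw [show -s - (s' - s) = -s' by ring] at ho
  filter_upwards [ho.def one_half_pos, eventually_gt_atTop 0] with N hN hN0
  have hpos : 0 < (N : ℝ) ^ (-s') := Real.rpow_pos_of_pos (Nat.cast_pos.2 hN0) _
  simp only [Real.norm_eq_abs, abs_abs, abs_of_pos hpos] at hN
  linarith

lemma ScaleAtLeast.le_of_eventually_rpow_le (h : ScaleAtLeast a s)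
    (hb : ∀ᶠ N : ℕ in atTop, (N : ℝ) ^ (-s') ≤ |a N|) : s ≤ s' := by
  by_contra! hs
  obtain ⟨N, hle, hlt⟩ := (hb.and (h.eventually_lt_rpow hs)).exists
  exact hle.not_gt hlt

lemma ScaleAtMost.le_of_eventually_le_rpow (h : ScaleAtMost a s)
    (hb : ∀ᶠ N : ℕ in atTop, |a N| ≤ (N : ℝ) ^ (-s')) : s' ≤ s := by
  by_contra! hs
  obtain ⟨N, hle, hlt⟩ := (hb.and (h.eventually_rpow_lt hs)).exists
  exact hle.not_gt hlt

end Scale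

/-- `N ↦ N ^ (-τ N)`, set to `1` at `N = 0`, where the real power can be `0`. -/
noncomputable def negRpowSeq (τ : ℕ → ℝ) (N : ℕ) : ℝ :=
  if N = 0 then 1 else (N : ℝ) ^ (-τ N)

lemma negRpowSeq_mem_Ioc {τ : ℕ → ℝ} (hτ : ∀ N, 0 ≤ τ N) (N : ℕ) :
    negRpowSeq τ N ∈ Set.Ioc (0 : ℝ) 1 := by
  rcases Nat.eq_zero_or_pos N with rfl | hN
  · simp [negRpowSeq]
  · have hN1 : (1 : ℝ) ≤ N := by exact_mod_cast hN
    rw [negRpowSeq, if_neg hN.ne']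
    exact ⟨Real.rpow_pos_of_pos (by linarith) _,
      Real.rpow_le_one_of_one_le_of_nonpos hN1 (neg_nonpos.2 (hτ N))⟩

lemma abs_negRpowSeq_eventuallyEq (τ : ℕ → ℝ) :
    (fun N => |negRpowSeq τ N|) =ᶠ[atTop] fun N : ℕ => (N : ℝ) ^ (-τ N) := by
  filter_upwards [eventually_gt_atTop 0] with N hN
  rw [negRpowSeq, if_neg hN.ne', abs_of_nonneg (Real.rpow_nonneg (Nat.cast_nonneg N) _)]

lemma hasScale_negRpowSeq {τ : ℕ → ℝ} {s : ℝ} (hτ : Tendsto τ atTop (𝓝 s)) :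
    HasScale (negRpowSeq τ) s := by
  have hclose : ∀ ε > 0, ∀ᶠ N in atTop, τ N ∈ Set.Ioo (s - ε / 2) (s + ε / 2) := fun ε hε =>
    hτ (Ioo_mem_nhds (by linarith) (by linarith))
  constructor
  · intro ε hε
    refine (isLittleO_natCast_rpow_of_add_le (half_pos hε) ?_).congr'
      (abs_negRpowSeq_eventuallyEq τ).symm EventuallyEq.rfl
    filter_upwards [hclose ε hε] with N hN
    linarith [hN.1]
  · intro ε hε
    refine (isLittleO_natCast_rpow_of_add_le (half_pos hε) ?_).congr'
      EventuallyEq.rfl (abs_negRpowSeq_eventuallyEq τ).symm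
    filter_upwards [hclose ε hε] with N hN
    linarith [hN.2]

namespace HasScalingProfile

variable {g : ℕ → ℝ → ℝ} {S : ℝ → ℝ} {t : ℕ → ℝ} {x c : ℝ}

lemma hasScale_comp_negRpowSeq (hprof : HasScalingProfile g S) {τ : ℕ → ℝ} {s : ℝ}
    (hτ0 : ∀ N, 0 ≤ τ N) (hτ : Tendsto τ atTop (𝓝 s)) :
    HasScale (fun N => g N (negRpowSeq τ N)) (S s) :=
  hprof _ (negRpowSeq_mem_Ioc hτ0) s (ge_of_tendsto' hτ hτ0) (hasScale_negRpowSeq hτ)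

lemma exists_hasScale_eventually (hprof : HasScalingProfile g S) (ht0 : ∀ n, 0 ≤ t n)
    (ht : Tendsto t atTop (𝓝 x)) {P : ℕ → ℝ → Prop}
    (hP : ∀ n, ∀ᶠ N in atTop, P N (g N (negRpowSeq (fun _ => t n) N))) :
    ∃ a : ℕ → ℝ, HasScale a (S x) ∧ ∀ᶠ N in atTop, P N (a N) := by
  obtain ⟨idx, hidx, hPidx⟩ := exists_tendsto_atTop_eventually_diag hP
  exact ⟨_, hprof.hasScale_comp_negRpowSeq (fun N => ht0 (idx N)) (ht.comp hidx), hPidx⟩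

lemma le_of_tendsto (hprof : HasScalingProfile g S) (ht0 : ∀ n, 0 ≤ t n)
    (ht : Tendsto t atTop (𝓝 x)) (hc : ∀ n, S (t n) ≤ c) : S x ≤ c := by
  refine le_of_forall_gt_imp_ge_of_dense fun c' hc' => ?_
  obtain ⟨a, ha, hlow⟩ := hprof.exists_hasScale_eventually ht0 ht
    (P := fun N y => (N : ℝ) ^ (-c') ≤ |y|) fun n =>
      ((hprof.hasScale_comp_negRpowSeq (fun _ => ht0 n) tendsto_const_nhds).2.eventually_rpow_lt
        ((hc n).trans_lt hc')).mono fun _ => le_of_lt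
  exact ha.1.le_of_eventually_rpow_le hlow

lemma ge_of_tendsto (hprof : HasScalingProfile g S) (ht0 : ∀ n, 0 ≤ t n)
    (ht : Tendsto t atTop (𝓝 x)) (hc : ∀ n, c ≤ S (t n)) : c ≤ S x := by
  refine le_of_forall_lt_imp_le_of_dense fun c' hc' => ?_
  obtain ⟨a, ha, hup⟩ := hprof.exists_hasScale_eventually ht0 ht
    (P := fun N y => |y| ≤ (N : ℝ) ^ (-c')) fun n =>
      ((hprof.hasScale_comp_negRpowSeq (fun _ => ht0 n) tendsto_const_nhds).1.eventually_lt_rpow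
        (hc'.trans_le (hc n))).mono fun _ => le_of_lt
  exact ha.2.le_of_eventually_le_rpow hup

end HasScalingProfile

theorem scalingProfile_continuousOn_general (g : ℕ → ℝ → ℝ) (S : ℝ → ℝ)
    (hprof : HasScalingProfile g S) :
    ContinuousOn S (Set.Ici 0) := by
  rw [continuousOn_iff_continuous_domRestrict, continuous_iff_lower_upperSemicontinuous,
    lowerSemicontinuous_iff_isClosed_preimage, upperSemicontinuous_iff_isClosed_preimage]
  refine ⟨fun c => IsSeqClosed.isClosed fun t x ht hx => ?_,
    fun c => IsSeqClosed.isClosed fun t x ht hx => ?_⟩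
  · exact hprof.le_of_tendsto (fun n => (t n).2) (tendsto_subtype_rng.1 hx) ht
  · exact hprof.ge_of_tendsto (fun n => (t n).2) (tendsto_subtype_rng.1 hx) ht

/-- a scaling profile of a sequence of measurable functions on `(0,1]`
is continuous on `[0,∞)`. -/
theorem scalingProfile_continuousOn (g : ℕ → ℝ → ℝ) (S : ℝ → ℝ)
    (hmeas : ∀ N, Measurable (g N))
    (hprof : HasScalingProfile g S) :
    ContinuousOn S (Set.Ici 0) :=
  scalingProfile_continuousOn_general g S hprof
end

section
/- Let g_N : (0,1] → ℝ be a sequence of measurable functions with a scaling profile S^{(g)}, integrable on [a_N,1], and let a_N > 0 be a sequence of scale a > 0 with a_N ≤ 1. Then the sequence of integrals ∫_{a_N}^1 |g_N(λ)| dλ has scale s_* = min_{0 ≤ s ≤ a} ( S^{(g)}(s) + s ). -/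
open Filter Asymptotics MeasureTheory

/-! Write `λ = N ^ (-e)`. Testing the profile along sequences `N ^ (-E N)` with `E N → t`, a
diagonal argument makes the bounds `N ^ (-S t ∓ ε)` on `|g N (N ^ (-e))|` uniform for `e` near `t`;
comparing these bounds at nearby `t` shows that `S` is continuous, so `S t + t` attains its
minimum `s_*` on `[0, a]`. The part of `[a_N, 1]` where `λ ≈ N ^ (-t)` has length `≈ N ^ (-t)`,
so one such piece near a minimiser gives the lower bound `N ^ (-s_* - ε)`. For the upper bound,
compactness of `[0, a]` gives `λ * |g N λ| ≤ N ^ (-s_* + ε)` on all of `[a_N, 1]`, and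
`∫_{a_N}^1 dλ / λ = O(log N)`.
-/

open Set Topology

lemma isLittleO_natCast_rpow_of_lt {p q : ℝ} (h : p < q) :
    (fun N : ℕ => (N : ℝ) ^ p) =o[atTop] fun N : ℕ => (N : ℝ) ^ q := by
  have hp : (fun x : ℝ => x ^ (p - q)) =o[atTop] fun _ => (1 : ℝ) :=
    (isLittleO_one_iff ℝ).2 (by simpa using tendsto_rpow_neg_atTop (sub_pos.2 h))
  have hreal : (fun x : ℝ => x ^ p) =o[atTop] fun x => x ^ q := by
    refine ((hp.mul_isBigO (isBigO_refl (fun x : ℝ => x ^ q) atTop)).congr' ?_ ?_)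
    · filter_upwards [eventually_gt_atTop 0] with x hx
      rw [← Real.rpow_add hx, sub_add_cancel]
    · simp
  exact hreal.comp_tendsto tendsto_natCast_atTop_atTop

lemma ScaleAtLeast.of_eventually_le {a : ℕ → ℝ} {s : ℝ}
    (h : ∀ ε > 0, ∃ C, ∀ᶠ N : ℕ in atTop, |a N| ≤ C * (N : ℝ) ^ (-s + ε)) : ScaleAtLeast a s := by
  intro ε hε
  obtain ⟨C, hC⟩ := h (ε / 2) (half_pos hε)
  refine IsBigO.trans_isLittleO ?_
    (isLittleO_natCast_rpow_of_lt (by linarith : -s + ε / 2 < -s + ε))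
  refine IsBigO.of_bound C ?_
  filter_upwards [hC] with N hN
  rwa [Real.norm_eq_abs, Real.norm_eq_abs, abs_abs,
    abs_of_nonneg (Real.rpow_nonneg N.cast_nonneg _)]

lemma ScaleAtMost.of_eventually_le {a : ℕ → ℝ} {s : ℝ}
    (h : ∀ ε > 0, ∃ c > 0, ∀ᶠ N : ℕ in atTop, c * (N : ℝ) ^ (-s - ε) ≤ |a N|) :
    ScaleAtMost a s := by
  intro ε hε
  obtain ⟨c, hc, hle⟩ := h (ε / 2) (half_pos hε)
  refine (isLittleO_natCast_rpow_of_lt (by linarith : -s - ε < -s - ε / 2)).trans_isBigO ?_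
  refine IsBigO.of_bound c⁻¹ ?_
  filter_upwards [hle] with N hN
  rwa [Real.norm_eq_abs, Real.norm_eq_abs, abs_abs,
    abs_of_nonneg (Real.rpow_nonneg N.cast_nonneg _), inv_mul_eq_div, le_div_iff₀' hc]

lemma ScaleAtLeast.eventually_abs_le {a : ℕ → ℝ} {s : ℝ} (h : ScaleAtLeast a s) {ε : ℝ}
    (hε : 0 < ε) : ∀ᶠ N : ℕ in atTop, |a N| ≤ (N : ℝ) ^ (-s + ε) := by
  filter_upwards [(h ε hε).bound one_pos] with N hN
  simpa [abs_of_nonneg (Real.rpow_nonneg (Nat.cast_nonneg N) _)] using hN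

lemma ScaleAtMost.eventually_le_abs {a : ℕ → ℝ} {s : ℝ} (h : ScaleAtMost a s) {ε : ℝ}
    (hε : 0 < ε) : ∀ᶠ N : ℕ in atTop, (N : ℝ) ^ (-s - ε) ≤ |a N| := by
  filter_upwards [(h ε hε).bound one_pos] with N hN
  simpa [abs_of_nonneg (Real.rpow_nonneg (Nat.cast_nonneg N) _)] using hN

lemma StrictMono.tendsto_extend {X : Type*} [TopologicalSpace X] {φ : ℕ → ℕ}
    (hφ : StrictMono φ) {e : ℕ → X} {t : X} (he : Tendsto e atTop (𝓝 t)) :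
    Tendsto (Function.extend φ e fun _ => t) atTop (𝓝 t) := by
  intro U hU
  obtain ⟨K, hK⟩ := eventually_atTop.1 (he hU)
  refine mem_atTop_sets.2 ⟨φ K, fun N hN => ?_⟩
  by_cases hrange : ∃ k, φ k = N
  · obtain ⟨k, rfl⟩ := hrange
    rw [mem_preimage, hφ.injective.extend_apply]
    exact hK k (hφ.le_iff_le.1 hN)
  · rw [mem_preimage, Function.extend_apply' _ _ _ hrange]
    exact mem_of_mem_nhds hU

lemma eventually_atTop_prod_nhds_of_forall_tendsto {X : Type*} [TopologicalSpace X]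
    [FirstCountableTopology X] {t : X} {Q : ℕ × X → Prop}
    (h : ∀ E : ℕ → X, Tendsto E atTop (𝓝 t) → ∀ᶠ N in atTop, Q (N, E N)) :
    ∀ᶠ p in atTop ×ˢ 𝓝 t, Q p := by
  obtain ⟨u, hu⟩ := (𝓝 t).exists_antitone_basis
  by_contra hcon
  have hbad : ∀ k, ∃ᶠ N in atTop, ∃ e ∈ u k, ¬Q (N, e) := by
    intro k
    refine frequently_atTop.2 fun M => ?_
    obtain ⟨⟨N, e⟩, ⟨hN, he⟩, hQ⟩ :=
      (atTop_basis.prod hu.toHasBasis).frequently_iff.1 (not_eventually.1 hcon) (i := (M, k))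
        ⟨trivial, trivial⟩
    exact ⟨N, hN, e, he, hQ⟩
  -- failures in ever smaller neighbourhoods `u k` of `t` are spliced into one sequence
  obtain ⟨φ, hφ, hφbad⟩ := extraction_forall_of_frequently hbad
  choose e he hQ using hφbad
  obtain ⟨k, hk⟩ := (hφ.tendsto_atTop.eventually (h _ (hφ.tendsto_extend (hu.tendsto he)))).exists
  exact hQ k (by rwa [hφ.injective.extend_apply] at hk)

lemma exists_pos_eventually_forall_dist_lt {α X : Type*} [PseudoMetricSpace X] {l : Filter α}
    {t : X} {P : α × X → Prop} (h : ∀ᶠ p in l ×ˢ 𝓝 t, P p) :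
    ∃ δ > 0, ∀ᶠ N in l, ∀ e, dist e t < δ → P (N, e) := by
  obtain ⟨pa, hpa, pb, hpb, hp⟩ := eventually_prod_iff.1 h
  obtain ⟨δ, hδ, hδb⟩ := Metric.eventually_nhds_iff.1 hpb
  exact ⟨δ, hδ, hpa.mono fun N hN e he => hp hN (hδb he)⟩

lemma hasScale_max_one_rpow_neg {E : ℕ → ℝ} {t : ℝ} (hE : Tendsto E atTop (𝓝 t)) :
    HasScale (fun N => max (N : ℝ) 1 ^ (-E N)) t := by
  have key : ∀ ε > 0, ∀ᶠ N : ℕ in atTop, (N : ℝ) ^ (-t - ε) ≤ |max (N : ℝ) 1 ^ (-E N)| ∧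
      |max (N : ℝ) 1 ^ (-E N)| ≤ (N : ℝ) ^ (-t + ε) := by
    intro ε hε
    filter_upwards [eventually_ge_atTop 1,
      hE.eventually (Ioo_mem_nhds (sub_lt_self t hε) (lt_add_of_pos_right t hε))] with N hN hEN
    have hN' : (1 : ℝ) ≤ N := by exact_mod_cast hN
    rw [max_eq_left hN', abs_of_pos (by positivity)]
    exact ⟨Real.rpow_le_rpow_of_exponent_le hN' (by linarith [hEN.2]),
      Real.rpow_le_rpow_of_exponent_le hN' (by linarith [hEN.1])⟩
  exact ⟨.of_eventually_le fun ε hε => ⟨1, by simpa using (key ε hε).mono fun _ h => h.2⟩,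
    .of_eventually_le fun ε hε => ⟨1, one_pos, by simpa using (key ε hε).mono fun _ h => h.1⟩⟩

section Profile

variable {g : ℕ → ℝ → ℝ} {S : ℝ → ℝ}

lemma HasScalingProfile.eventually_rpow_le_abs_le (hprof : HasScalingProfile g S) {t : ℝ}
    (ht : 0 ≤ t) {ε : ℝ} (hε : 0 < ε) :
    ∀ᶠ p : ℕ × ℝ in atTop ×ˢ 𝓝 t, 0 ≤ p.2 →
      (p.1 : ℝ) ^ (-S t - ε) ≤ |g p.1 ((p.1 : ℝ) ^ (-p.2))| ∧
        |g p.1 ((p.1 : ℝ) ^ (-p.2))| ≤ (p.1 : ℝ) ^ (-S t + ε) := by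
  refine eventually_atTop_prod_nhds_of_forall_tendsto fun E hE => ?_
  -- base `max N 1` rather than `N`, since `(0 : ℝ) ^ (-e) = 0 ∉ (0, 1]` for `e ≠ 0`
  have hE' : Tendsto (fun N => max (E N) 0) atTop (𝓝 t) := by
    simpa [max_eq_left ht] using hE.max (tendsto_const_nhds (x := (0 : ℝ)))
  have hmem : ∀ N : ℕ, max (N : ℝ) 1 ^ (-max (E N) 0) ∈ Ioc 0 1 := fun N =>
    ⟨by positivity, Real.rpow_le_one_of_one_le_of_nonpos (le_max_right _ _) (by simp)⟩
  have hg := hprof _ hmem t ht (hasScale_max_one_rpow_neg hE')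
  filter_upwards [hg.1.eventually_abs_le hε, hg.2.eventually_le_abs hε, eventually_ge_atTop 1]
    with N hup hlow hN hEN
  rw [max_eq_left (by exact_mod_cast hN : (1 : ℝ) ≤ N), max_eq_left hEN] at hup hlow
  exact ⟨hlow, hup⟩

lemma HasScalingProfile.continuousOn (hprof : HasScalingProfile g S) :
    ContinuousOn S (Ici 0) := by
  refine Metric.continuousOn_iff.2 fun t ht ε hε => ?_
  obtain ⟨δ, hδ, hnear⟩ :=
    exists_pos_eventually_forall_dist_lt
      (hprof.eventually_rpow_le_abs_le ht (by positivity : 0 < ε / 3))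
  refine ⟨δ, hδ, fun t' ht' hdist => ?_⟩
  have hat : ∀ᶠ N : ℕ in atTop, (N : ℝ) ^ (-S t' - ε / 3) ≤ |g N ((N : ℝ) ^ (-t'))| ∧
      |g N ((N : ℝ) ^ (-t'))| ≤ (N : ℝ) ^ (-S t' + ε / 3) :=
    (hprof.eventually_rpow_le_abs_le ht' (by positivity : 0 < ε / 3)).curry.mono
      fun N hN => hN.self_of_nhds ht'
  obtain ⟨N, hnearN, hatN, hN2⟩ := (hnear.and (hat.and (eventually_ge_atTop 2))).exists
  have hN1 : (1 : ℝ) < N := by exact_mod_cast hN2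
  obtain ⟨hlow, hup⟩ := hnearN t' hdist ht'
  have h1 := (Real.rpow_le_rpow_left_iff hN1).1 (hlow.trans hatN.2)
  have h2 := (Real.rpow_le_rpow_left_iff hN1).1 (hatN.1.trans hup)
  rw [Real.dist_eq, abs_lt]
  constructor <;> linarith

lemma HasScalingProfile.exists_eventually_rpow_mul_abs_le (hprof : HasScalingProfile g S)
    {a s ε : ℝ} (ha : 0 ≤ a) (hs : ∀ t ∈ Icc 0 a, s ≤ S t + t) (hε : 0 < ε) :
    ∃ δ > 0, ∀ᶠ N : ℕ in atTop, ∀ e ∈ Icc 0 (a + δ),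
      (N : ℝ) ^ (-e) * |g N ((N : ℝ) ^ (-e))| ≤ (N : ℝ) ^ (-s + ε) := by
  have hloc : ∀ t ∈ Icc 0 a, ∀ᶠ p : ℕ × ℝ in atTop ×ˢ 𝓝 t, 0 ≤ p.2 →
      (p.1 : ℝ) ^ (-p.2) * |g p.1 ((p.1 : ℝ) ^ (-p.2))| ≤ (p.1 : ℝ) ^ (-s + ε) := by
    intro t ht
    filter_upwards [hprof.eventually_rpow_le_abs_le ht.1 (half_pos hε),
      tendsto_fst.eventually (eventually_ge_atTop 1),
      tendsto_snd.eventually (eventually_gt_nhds (by linarith : t - ε / 2 < t))]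
      with ⟨N, e⟩ hg hN he he0
    have hN' : (1 : ℝ) ≤ N := by exact_mod_cast hN
    calc (N : ℝ) ^ (-e) * |g N ((N : ℝ) ^ (-e))|
        ≤ (N : ℝ) ^ (-t + ε / 2) * (N : ℝ) ^ (-S t + ε / 2) :=
          mul_le_mul (Real.rpow_le_rpow_of_exponent_le hN' (by linarith)) (hg he0).2
            (abs_nonneg _) (by positivity)
      _ = (N : ℝ) ^ (-(S t + t) + ε) := by
          rw [← Real.rpow_add (by linarith)]; ring_nf
      _ ≤ (N : ℝ) ^ (-s + ε) :=
          Real.rpow_le_rpow_of_exponent_le hN' (by linarith [hs t ht])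
  obtain ⟨A, hA, U, hU, hAU⟩ := mem_prod_iff.1 (isCompact_Icc.mem_prod_nhdsSet_of_forall hloc)
  obtain ⟨δ, hδ, hball⟩ := Metric.mem_nhds_iff.1 (mem_nhdsSet_iff_forall.1 hU a ⟨ha, le_rfl⟩)
  refine ⟨δ / 2, half_pos hδ, ?_⟩
  filter_upwards [hA] with N hN e he
  refine hAU (mk_mem_prod hN ?_) he.1
  rcases le_or_gt e a with hea | hea
  · exact subset_of_mem_nhdsSet hU ⟨he.1, hea⟩
  · exact hball (by rw [Metric.mem_ball, Real.dist_eq, abs_lt]; constructor <;> linarith [he.2])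

end Profile

lemma setIntegral_Icc_le_mul_log {f : ℝ → ℝ} {b c C : ℝ} (hb : 0 < b) (hbc : b ≤ c)
    (hf : IntegrableOn f (Icc b c)) (h : ∀ x ∈ Icc b c, f x ≤ C / x) :
    ∫ x in Icc b c, f x ≤ C * Real.log (c / b) := by
  have hinv : IntegrableOn (fun x => C / x) (Icc b c) :=
    (continuousOn_const.div continuousOn_id fun x hx => (hb.trans_le hx.1).ne').integrableOn_Icc
  calc ∫ x in Icc b c, f x ≤ ∫ x in Icc b c, C / x :=
        setIntegral_mono_on hf hinv measurableSet_Icc h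
    _ = C * Real.log (c / b) := by
      rw [integral_Icc_eq_integral_Ioc, ← intervalIntegral.integral_of_le hbc]
      simp only [div_eq_mul_inv C, intervalIntegral.integral_const_mul,
        integral_inv_of_pos hb (hb.trans_le hbc)]

lemma exists_mem_Icc_rpow_neg_eq {N x b c : ℝ} (hN : 1 < N) (hx : x ∈ Icc (N ^ (-b)) (N ^ (-c))) :
    ∃ e ∈ Icc c b, N ^ (-e) = x := by
  have hN0 : 0 < N := by linarith
  have hx0 : 0 < x := (Real.rpow_pos_of_pos hN0 _).trans_le hx.1
  have hlogb : ∀ y, Real.logb N (N ^ y) = y := fun y => Real.logb_rpow hN0 hN.ne'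
  refine ⟨-Real.logb N x, ⟨?_, ?_⟩, by rw [neg_neg, Real.rpow_logb hN0 hN.ne' hx0]⟩
  · have := Real.logb_le_logb_of_le hN hx0 hx.2
    rw [hlogb] at this
    linarith
  · have := Real.logb_le_logb_of_le hN (Real.rpow_pos_of_pos hN0 _) hx.1
    rw [hlogb] at this
    linarith

lemma exists_Icc_subset_ball_of_mem_Icc {t δ a : ℝ} (hδ : 0 < δ) (ha : 0 < a)
    (ht : t ∈ Icc 0 a) : ∃ u v, 0 ≤ u ∧ u < v ∧ v < a ∧ u ≤ t ∧ Icc u v ⊆ Metric.ball t δ := by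
  have hη : 0 < min δ a := lt_min hδ ha
  have hηδ := min_le_left δ a
  have hηa := min_le_right δ a
  refine ⟨max (t - min δ a / 2) 0, max (t - min δ a / 2) 0 + min δ a / 4, le_max_right _ _,
    by linarith, ?_, max_le (by linarith) ht.1, fun e he => ?_⟩
  · rcases max_cases (t - min δ a / 2) 0 with ⟨h, h'⟩ | ⟨h, h'⟩ <;> linarith [ht.2]
  · rw [Metric.mem_ball, Real.dist_eq, abs_lt]
    rcases max_cases (t - min δ a / 2) 0 with ⟨h, h'⟩ | ⟨h, h'⟩ <;>
      constructor <;> linarith [he.1, he.2, ht.1]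

section Integral

variable {g : ℕ → ℝ → ℝ} {S : ℝ → ℝ} {a : ℝ} {aN : ℕ → ℝ}

lemma scaleAtLeast_setIntegral_abs (hprof : HasScalingProfile g S)
    (hint : ∀ N, IntegrableOn (g N) (Icc (aN N) 1)) (haN_pos : ∀ N, 0 < aN N)
    (haN_le : ∀ N, aN N ≤ 1) (hscale : ScaleAtMost aN a) (ha : 0 ≤ a) {s : ℝ}
    (hs : ∀ t ∈ Icc 0 a, s ≤ S t + t) :
    ScaleAtLeast (fun N => ∫ x in Icc (aN N) 1, |g N x|) s := by
  refine ScaleAtLeast.of_eventually_le fun ε hε => ?_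
  obtain ⟨δ, hδ, hpt⟩ := hprof.exists_eventually_rpow_mul_abs_le ha hs (half_pos hε)
  have hlog : ∀ᶠ N : ℕ in atTop, Real.log N ≤ (N : ℝ) ^ (ε / 2) := by
    filter_upwards [tendsto_natCast_atTop_atTop.eventually
      ((isLittleO_log_rpow_atTop (half_pos hε)).bound one_pos)] with N hN
    simpa [abs_of_nonneg (Real.rpow_nonneg N.cast_nonneg _)] using (le_abs_self _).trans hN
  refine ⟨a + δ, ?_⟩
  filter_upwards [hpt, hscale.eventually_le_abs hδ, hlog, eventually_ge_atTop 2]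
    with N hpt haN hlog hN2
  have hN1 : (1 : ℝ) < N := by exact_mod_cast hN2
  rw [abs_of_pos (haN_pos N), sub_eq_add_neg, ← neg_add] at haN
  have hbound : ∀ x ∈ Icc (aN N) 1, |g N x| ≤ (N : ℝ) ^ (-s + ε / 2) / x := by
    intro x hx
    obtain ⟨e, he, rfl⟩ :=
      exists_mem_Icc_rpow_neg_eq (c := 0) hN1 ⟨haN.trans hx.1, hx.2.trans_eq (by simp)⟩
    rw [le_div_iff₀ (by positivity), mul_comm]
    exact hpt e he
  have hlogaN : Real.log (1 / aN N) ≤ (a + δ) * Real.log N := by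
    have := Real.log_le_log (by positivity) haN
    rw [Real.log_rpow (by positivity)] at this
    rw [one_div, Real.log_inv]
    linarith
  rw [abs_of_nonneg (setIntegral_nonneg measurableSet_Icc fun _ _ => abs_nonneg _)]
  calc ∫ x in Icc (aN N) 1, |g N x|
      ≤ (N : ℝ) ^ (-s + ε / 2) * Real.log (1 / aN N) :=
        setIntegral_Icc_le_mul_log (haN_pos N) (haN_le N) (hint N).abs hbound
    _ ≤ (N : ℝ) ^ (-s + ε / 2) * ((a + δ) * (N : ℝ) ^ (ε / 2)) := by
        gcongr
        exact hlogaN.trans (by gcongr)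
    _ = (a + δ) * (N : ℝ) ^ (-s + ε) := by
        rw [mul_left_comm, ← Real.rpow_add (by positivity)]; ring_nf

lemma scaleAtMost_setIntegral_abs (hprof : HasScalingProfile g S)
    (hint : ∀ N, IntegrableOn (g N) (Icc (aN N) 1)) (ha : 0 < a) (hscale : ScaleAtLeast aN a)
    {t₀ : ℝ} (ht₀ : t₀ ∈ Icc 0 a) :
    ScaleAtMost (fun N => ∫ x in Icc (aN N) 1, |g N x|) (S t₀ + t₀) := by
  refine ScaleAtMost.of_eventually_le fun ε hε => ⟨1 / 2, one_half_pos, ?_⟩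
  obtain ⟨δ, hδ, hnear⟩ := exists_pos_eventually_forall_dist_lt
    (hprof.eventually_rpow_le_abs_le ht₀.1 hε)
  obtain ⟨u, v, hu0, huv, hva, hut, hwindow⟩ := exists_Icc_subset_ball_of_mem_Icc hδ ha ht₀
  have hhalf : ∀ᶠ N : ℕ in atTop, (N : ℝ) ^ (-(v - u)) ≤ 1 / 2 :=
    tendsto_natCast_atTop_atTop.eventually
      ((tendsto_rpow_neg_atTop (sub_pos.2 huv)).eventually_le_const one_half_pos)
  filter_upwards [hnear, hscale.eventually_abs_le (sub_pos.2 hva), hhalf, eventually_ge_atTop 2]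
    with N hnear haN hhalf hN2
  have hN1 : (1 : ℝ) < N := by exact_mod_cast hN2
  have hN0 : (0 : ℝ) < N := by linarith
  rw [show -a + (a - v) = -v by ring] at haN
  have hsub : Icc ((N : ℝ) ^ (-v)) ((N : ℝ) ^ (-u)) ⊆ Icc (aN N) 1 :=
    Icc_subset_Icc ((le_abs_self _).trans haN)
      (Real.rpow_le_one_of_one_le_of_nonpos hN1.le (by linarith))
  have hvu : (N : ℝ) ^ (-v) ≤ (N : ℝ) ^ (-u) / 2 :=
    calc (N : ℝ) ^ (-v) = (N : ℝ) ^ (-u) * (N : ℝ) ^ (-(v - u)) := by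
          rw [← Real.rpow_add hN0]; ring_nf
      _ ≤ (N : ℝ) ^ (-u) * (1 / 2) := by gcongr
      _ = (N : ℝ) ^ (-u) / 2 := by ring
  have hglow : ∀ x ∈ Icc ((N : ℝ) ^ (-v)) ((N : ℝ) ^ (-u)), (N : ℝ) ^ (-S t₀ - ε) ≤ |g N x| := by
    intro x hx
    obtain ⟨e, he, rfl⟩ := exists_mem_Icc_rpow_neg_eq hN1 hx
    exact (hnear e (hwindow he) (hu0.trans he.1)).1
  rw [abs_of_nonneg (setIntegral_nonneg measurableSet_Icc fun _ _ => abs_nonneg _)]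
  calc 1 / 2 * (N : ℝ) ^ (-(S t₀ + t₀) - ε)
      = (N : ℝ) ^ (-S t₀ - ε) * (N : ℝ) ^ (-t₀) / 2 := by
        rw [← Real.rpow_add hN0]; ring_nf
    _ ≤ (N : ℝ) ^ (-S t₀ - ε) * (N : ℝ) ^ (-u) / 2 := by
        gcongr
        exact hN1.le
    _ ≤ (N : ℝ) ^ (-S t₀ - ε) * volume.real (Icc ((N : ℝ) ^ (-v)) ((N : ℝ) ^ (-u))) := by
        rw [Real.volume_real_Icc_of_le (hvu.trans (half_le_self (by positivity))), mul_div_assoc]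
        gcongr
        linarith
    _ ≤ ∫ x in Icc ((N : ℝ) ^ (-v)) ((N : ℝ) ^ (-u)), |g N x| :=
        setIntegral_ge_of_const_le_real measurableSet_Icc measure_Icc_lt_top.ne hglow
          (IntegrableOn.mono_set (hint N).abs hsub)
    _ ≤ ∫ x in Icc (aN N) 1, |g N x| :=
        setIntegral_mono_set (hint N).abs (Eventually.of_forall fun _ => abs_nonneg _)
          hsub.eventuallyLE

end Integral

theorem scale_of_integral_general (g : ℕ → ℝ → ℝ) (S : ℝ → ℝ) (a : ℝ) (aN : ℕ → ℝ)
    (hprof : HasScalingProfile g S)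
    (hint : ∀ N, IntegrableOn (g N) (Set.Icc (aN N) 1))
    (haN_pos : ∀ N, 0 < aN N) (haN_le : ∀ N, aN N ≤ 1)
    (ha : 0 < a) (hscale : HasScale aN a) :
    HasScale (fun N => ∫ lam in Set.Icc (aN N) 1, |g N lam|)
      (sInf ((fun s => S s + s) '' Set.Icc 0 a)) := by
  obtain ⟨t₀, ht₀, hsInf, hmin⟩ := isCompact_Icc.exists_sInf_image_eq_and_le (f := fun s => S s + s)
    (nonempty_Icc.2 ha.le) ((hprof.continuousOn.mono Icc_subset_Ici_self).add continuousOn_id)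
  rw [hsInf]
  exact ⟨scaleAtLeast_setIntegral_abs hprof hint haN_pos haN_le hscale.2 ha.le hmin,
    scaleAtMost_setIntegral_abs hprof hint ha hscale.1 ht₀⟩

/-- scale of the integrals `∫_{a_N}^1 |g_N(λ)| dλ` for a sequence of
functions with scaling profile `S` and a lower limit sequence `a_N` of scale `a > 0`. -/
theorem scale_of_integral (g : ℕ → ℝ → ℝ) (S : ℝ → ℝ) (a : ℝ) (aN : ℕ → ℝ)
    (hmeas : ∀ N, Measurable (g N))
    (hprof : HasScalingProfile g S)
    (hint : ∀ N, IntegrableOn (g N) (Set.Icc (aN N) 1))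
    (haN_pos : ∀ N, 0 < aN N) (haN_le : ∀ N, aN N ≤ 1)
    (ha : 0 < a) (hscale : HasScale aN a) :
    HasScale (fun N => ∫ lam in Set.Icc (aN N) 1, |g N lam|)
      (sInf ((fun s => S s + s) '' Set.Icc 0 a)) :=
  scale_of_integral_general g S a aN hprof hint haN_pos haN_le ha hscale
end

section
/- Let g_N : (0,1]×(0,1] → ℝ be a sequence of measurable functions with a two-variable scaling profile S^{(g)}(s_1,s_2) (meaning: for all sequences λ_{1,N}, λ_{2,N} ∈ (0,1] of scales s_1 and s_2 respectively, |g_N(λ_{1,N},λ_{2,N})| has scale S^{(g)}(s_1,s_2)), and let a_N > 0 be a sequence of scale a > 0 with a_N ≤ 1. Then the sequence of double integrals ∫_{a_N}^1 ∫_{a_N}^1 |g_N(λ_1,λ_2)| dλ_1 dλ_2 has scale min_{0 ≤ s_1, s_2 ≤ a} ( S^{(g)}(s_1,s_2) + s_1 + s_2 ). -/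
open Filter Asymptotics MeasureTheory

/-- Two-variable scaling profile. -/
def HasScalingProfile2 (g : ℕ → ℝ → ℝ → ℝ) (S : ℝ → ℝ → ℝ) : Prop :=
  ∀ lam1 lam2 : ℕ → ℝ, (∀ N, lam1 N ∈ Set.Ioc (0 : ℝ) 1) →
    (∀ N, lam2 N ∈ Set.Ioc (0 : ℝ) 1) →
    ∀ s1 s2 : ℝ, 0 ≤ s1 → 0 ≤ s2 → HasScale lam1 s1 → HasScale lam2 s2 →
      HasScale (fun N => g N (lam1 N) (lam2 N)) (S s1 s2)

/-!
Write points of `(0, 1]` as `N ^ (-t)`. For the lower bound, fix `(s₁, s₂) ∈ [0, a]²` and take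
`u_i ≈ N ^ (-s_i)` with `u_i ≥ a_N`: the box `[u₁, 2u₁] × [u₂, 2u₂]` lies in the square and has
area `≈ N ^ (-s₁ - s₂)`, and a point of the box where `|g_N|` is at most its mean gives sequences
of scales `s₁, s₂`, so the integral is at least `N ^ (-S(s₁, s₂) - s₁ - s₂ - o(1))`.

For the upper bound, the profile forces `|g_N(λ)| λ₁ λ₂ ≤ N ^ (-M + o(1))` uniformly on the
square, `M` being the minimum: otherwise there are bad points `λ` for infinitely many `N`; along a
subsequence the exponents `-log λ_i / log N` converge to some `s_i ∈ [0, a]`, and the bad points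
extend to whole sequences of scales `s_i`, contradicting the profile. Integrating against
`dλ₁ dλ₂ / (λ₁ λ₂)` then costs only the factor `log² a_N = N ^ o(1)`. The same compactness argument
shows that the quantity being minimised is bounded below, so that `sInf` is the true infimum.
-/

open Real Set Topology

lemma isLittleO_natCast_rpow {p q : ℝ} (h : p < q) :
    (fun N : ℕ => (N : ℝ) ^ p) =o[atTop] fun N => (N : ℝ) ^ q := by
  have hlim : Tendsto (fun N : ℕ => (N : ℝ) ^ (p - q)) atTop (𝓝 0) := by
    have := (tendsto_rpow_neg_atTop (sub_pos.2 h)).comp tendsto_natCast_atTop_atTop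
    simpa only [neg_sub, Function.comp_def] using this
  refine (((isLittleO_one_iff ℝ).2 hlim).mul_isBigO
    (isBigO_refl (fun N : ℕ => (N : ℝ) ^ q) atTop)).congr' ?_ (.of_forall fun N => one_mul _)
  filter_upwards [eventually_gt_atTop 0] with N hN
  rw [← rpow_add (Nat.cast_pos.2 hN), sub_add_cancel]

lemma scaleAtLeast_iff {x : ℕ → ℝ} {s : ℝ} :
    ScaleAtLeast x s ↔ ∀ δ > 0, ∀ᶠ N : ℕ in atTop, |x N| ≤ (N : ℝ) ^ (-s + δ) := by
  refine ⟨fun h δ hδ => ?_, fun h ε hε => ?_⟩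
  · filter_upwards [(h δ hδ).bound one_pos] with N hN
    simpa [abs_of_nonneg (rpow_nonneg N.cast_nonneg _)] using hN
  · refine IsBigO.trans_isLittleO ?_ (isLittleO_natCast_rpow (by linarith : -s + ε / 2 < -s + ε))
    refine IsBigO.of_bound 1 ?_
    filter_upwards [h (ε / 2) (half_pos hε)] with N hN
    simpa [abs_of_nonneg (rpow_nonneg N.cast_nonneg _)] using hN

lemma scaleAtMost_iff {x : ℕ → ℝ} {s : ℝ} :
    ScaleAtMost x s ↔ ∀ δ > 0, ∀ᶠ N : ℕ in atTop, (N : ℝ) ^ (-s - δ) ≤ |x N| := by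
  refine ⟨fun h δ hδ => ?_, fun h ε hε => ?_⟩
  · filter_upwards [(h δ hδ).bound one_pos] with N hN
    simpa [abs_of_nonneg (rpow_nonneg N.cast_nonneg _)] using hN
  · refine (isLittleO_natCast_rpow (by linarith : -s - ε < -s - ε / 2)).trans_isBigO ?_
    refine IsBigO.of_bound 1 ?_
    filter_upwards [h (ε / 2) (half_pos hε)] with N hN
    simpa [abs_of_nonneg (rpow_nonneg N.cast_nonneg _)] using hN

lemma hasScale_iff {x : ℕ → ℝ} {s : ℝ} :
    HasScale x s ↔ ∀ δ > 0, ∀ᶠ N : ℕ in atTop,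
      (N : ℝ) ^ (-s - δ) ≤ |x N| ∧ |x N| ≤ (N : ℝ) ^ (-s + δ) := by
  simp only [HasScale, scaleAtLeast_iff, scaleAtMost_iff, ← forall₂_and, eventually_and, and_comm]

lemma tendsto_zero_of_hasScale {x : ℕ → ℝ} {s : ℝ} (hx : HasScale x s) (hs : 0 < s) :
    Tendsto x atTop (𝓝 0) := by
  have hlim : Tendsto (fun N : ℕ => (N : ℝ) ^ (-s + s / 2)) atTop (𝓝 0) := by
    have := (tendsto_rpow_neg_atTop (half_pos hs)).comp tendsto_natCast_atTop_atTop
    simpa only [Function.comp_def, show -(s / 2) = -s + s / 2 by ring] using this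
  refine squeeze_zero_norm' ?_ hlim
  filter_upwards [hasScale_iff.1 hx (s / 2) (half_pos hs)] with N hN using hN.2

lemma eventually_const_mul_rpow_le (c t : ℝ) {δ : ℝ} (hδ : 0 < δ) :
    ∀ᶠ N : ℕ in atTop, c * (N : ℝ) ^ t ≤ (N : ℝ) ^ (t + δ) := by
  filter_upwards [((tendsto_rpow_atTop hδ).comp tendsto_natCast_atTop_atTop).eventually_ge_atTop c,
    eventually_gt_atTop 0] with N hN hN0
  rw [rpow_add (Nat.cast_pos.2 hN0), mul_comm]
  exact mul_le_mul_of_nonneg_left hN (rpow_nonneg N.cast_nonneg _)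

lemma rpow_le_iff_le_log_div_log {b x t : ℝ} (hb : 1 < b) (hx : 0 < x) :
    b ^ t ≤ x ↔ t ≤ log x / log b := by
  rw [rpow_le_iff_le_log (by linarith) hx, le_div_iff₀ (log_pos hb)]

lemma le_rpow_iff_log_div_log_le {b x t : ℝ} (hb : 1 < b) (hx : 0 < x) :
    x ≤ b ^ t ↔ log x / log b ≤ t := by
  rw [le_rpow_iff_log_le hx (by linarith), div_le_iff₀ (log_pos hb)]

lemma log_div_log_mem_Icc {b x t : ℝ} (hb : 1 < b) (hx : b ^ t ≤ x) (hx1 : x ≤ 1) :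
    log x / log b ∈ Icc t 0 := by
  have hx0 : 0 < x := (rpow_pos_of_pos (by linarith) _).trans_le hx
  exact ⟨(rpow_le_iff_le_log_div_log hb hx0).1 hx,
    div_nonpos_of_nonpos_of_nonneg (log_nonpos hx0.le hx1) (log_nonneg hb.le)⟩

lemma hasScale_iff_tendsto_log_div_log {x : ℕ → ℝ} {s : ℝ} (hx : ∀ N, 0 < x N) :
    HasScale x s ↔ Tendsto (fun N : ℕ => log (x N) / log N) atTop (𝓝 (-s)) := by
  rw [hasScale_iff, (nhds_basis_Icc_pos _).tendsto_right_iff]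
  refine forall₂_congr fun δ _ => eventually_congr ?_
  filter_upwards [eventually_ge_atTop 2] with N hN
  have hN : (1 : ℝ) < N := by exact_mod_cast hN
  rw [abs_of_pos (hx N), rpow_le_iff_le_log_div_log hN (hx N),
    le_rpow_iff_log_div_log_le hN (hx N), mem_Icc, sub_eq_add_neg]

lemma exists_hasScale_extend {θ : ℕ → ℕ} (hθ : StrictMono θ) {x : ℕ → ℝ}
    (hx : ∀ k, x k ∈ Ioc (0 : ℝ) 1) {s : ℝ} (hs : 0 ≤ s)
    (hlim : Tendsto (fun k => log (x k) / log (θ k)) atTop (𝓝 (-s))) :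
    ∃ l : ℕ → ℝ, (∀ N, l N ∈ Ioc (0 : ℝ) 1) ∧ HasScale l s ∧ ∀ k, l (θ k) = x k := by
  -- off the range of `θ`, `l N = N ^ (-s)`, written so that `l 0 = 1`
  set l := Function.extend θ x fun N => exp (-s * log N)
  have hl_apply : ∀ k, l (θ k) = x k := hθ.injective.extend_apply x _
  have hl_of_notMem : ∀ N, (¬∃ k, θ k = N) → l N = exp (-s * log N) :=
    Function.extend_apply' _ _
  have hl_mem : ∀ N, l N ∈ Ioc (0 : ℝ) 1 := by
    intro N
    by_cases hN : ∃ k, θ k = N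
    · obtain ⟨k, rfl⟩ := hN
      rw [hl_apply]; exact hx k
    · rw [hl_of_notMem N hN]
      exact ⟨exp_pos _, exp_le_one_iff.2 (by nlinarith [log_natCast_nonneg N])⟩
  refine ⟨l, hl_mem, (hasScale_iff_tendsto_log_div_log fun N => (hl_mem N).1).2 ?_, hl_apply⟩
  rw [tendsto_nhds]
  intro U hU hsU
  obtain ⟨K, hK⟩ := eventually_atTop.1 (tendsto_nhds.1 hlim U hU hsU)
  filter_upwards [eventually_ge_atTop (θ K), eventually_ge_atTop 2] with N hNK hN2
  rw [mem_preimage]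
  by_cases hN : ∃ k, θ k = N
  · obtain ⟨k, rfl⟩ := hN
    rw [hl_apply]
    exact hK k (hθ.le_iff_le.1 hNK)
  · have hlogN : log N ≠ 0 := (log_pos (by exact_mod_cast hN2)).ne'
    rwa [hl_of_notMem N hN, log_exp, mul_div_cancel_right₀ _ hlogN]

lemma setIntegral_inv_mul_inv {b : ℝ} (hb : 0 < b) (hb1 : b ≤ 1) :
    ∫ z in Icc b 1 ×ˢ Icc b 1, z.1⁻¹ * z.2⁻¹ = log b ^ 2 := by
  rw [Measure.volume_eq_prod, setIntegral_prod_mul, integral_Icc_eq_integral_Ioc,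
    ← intervalIntegral.integral_of_le hb1, integral_inv_of_pos hb one_pos, one_div, log_inv]
  ring

section Average

variable {α : Type*} [MeasurableSpace α] {μ : Measure α} {f : α → ℝ} {s : Set α}

lemma exists_mul_measureReal_le_setIntegral (hμs : 0 < μ.real s) (hf : IntegrableOn f s μ) :
    ∃ x ∈ s, f x * μ.real s ≤ ∫ x in s, f x ∂μ := by
  obtain ⟨hμ, hμ'⟩ := ENNReal.toReal_pos_iff.1 hμs
  obtain ⟨x, hx, h⟩ := exists_le_setAverage hμ.ne' hμ'.ne hf
  refine ⟨x, hx, ?_⟩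
  rwa [setAverage_eq, smul_eq_mul, le_inv_mul_iff₀ hμs, mul_comm] at h

lemma exists_setIntegral_le_mul_measureReal (hμs : 0 < μ.real s) (hf : IntegrableOn f s μ) :
    ∃ x ∈ s, ∫ x in s, f x ∂μ ≤ f x * μ.real s := by
  obtain ⟨hμ, hμ'⟩ := ENNReal.toReal_pos_iff.1 hμs
  obtain ⟨x, hx, h⟩ := exists_setAverage_le hμ.ne' hμ'.ne hf
  refine ⟨x, hx, ?_⟩
  rwa [setAverage_eq, smul_eq_mul, inv_mul_le_iff₀ hμs, mul_comm] at h

end Average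

lemma exists_mul_le_setIntegral_Icc_prod_Icc {f : ℝ × ℝ → ℝ} {u₁ u₂ : ℝ} (hu₁ : 0 < u₁)
    (hu₂ : 0 < u₂) (hf : IntegrableOn f (Icc u₁ (2 * u₁) ×ˢ Icc u₂ (2 * u₂))) :
    ∃ q ∈ Icc u₁ (2 * u₁) ×ˢ Icc u₂ (2 * u₂),
      f q * (u₁ * u₂) ≤ ∫ z in Icc u₁ (2 * u₁) ×ˢ Icc u₂ (2 * u₂), f z := by
  have hvol : volume.real (Icc u₁ (2 * u₁) ×ˢ Icc u₂ (2 * u₂)) = u₁ * u₂ := by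
    rw [Measure.volume_eq_prod, measureReal_prod_prod, volume_real_Icc_of_le (by linarith),
      volume_real_Icc_of_le (by linarith)]
    ring
  simpa only [hvol] using exists_mul_measureReal_le_setIntegral (by rw [hvol]; positivity) hf

section ScalingProfile

variable {g : ℕ → ℝ → ℝ → ℝ} {S : ℝ → ℝ → ℝ} {a : ℝ} {aN : ℕ → ℝ}

lemma eventually_rpow_le_of_hasScale (haN_pos : ∀ N, 0 < aN N) (hscale : HasScale aN a) :
    ∀ᶠ N : ℕ in atTop, (N : ℝ) ^ (-a - 1) ≤ aN N := by
  filter_upwards [hasScale_iff.1 hscale 1 one_pos] with N hN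
  exact (abs_of_pos (haN_pos N)).symm ▸ hN.1

lemma eventually_log_sq_le_rpow (haN_pos : ∀ N, 0 < aN N) (ha : 0 < a) (hscale : HasScale aN a)
    {δ : ℝ} (hδ : 0 < δ) : ∀ᶠ N : ℕ in atTop, log (aN N) ^ 2 ≤ (N : ℝ) ^ δ := by
  have hlog : ∀ᶠ N : ℕ in atTop, (a + 1) * log N ≤ (N : ℝ) ^ (δ / 2) := by
    have := ((isLittleO_log_rpow_atTop (half_pos hδ)).const_mul_left (a + 1)).bound one_pos
    filter_upwards [tendsto_natCast_atTop_atTop.eventually this] with N hN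
    rwa [one_mul, norm_of_nonneg (by have := log_natCast_nonneg N; positivity),
      norm_of_nonneg (rpow_nonneg N.cast_nonneg _)] at hN
  filter_upwards [hlog, eventually_rpow_le_of_hasScale haN_pos hscale,
    (tendsto_zero_of_hasScale hscale ha).eventually_le_const one_pos, eventually_gt_atTop 0]
    with N hlogN haN haN1 hN
  have hN : (0 : ℝ) < N := by exact_mod_cast hN
  have hlow : (-a - 1) * log N ≤ log (aN N) := by
    rw [← log_rpow hN]; exact log_le_log (rpow_pos_of_pos hN _) haN
  calc log (aN N) ^ 2 ≤ ((a + 1) * log N) ^ 2 :=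
        sq_le_sq' (by linarith) ((log_nonpos (haN_pos N).le haN1).trans (by positivity))
    _ ≤ ((N : ℝ) ^ (δ / 2)) ^ 2 := pow_le_pow_left₀ (by positivity) hlogN 2
    _ = (N : ℝ) ^ δ := by rw [← rpow_natCast, ← rpow_mul hN.le]; ring_nf

lemma neg_le_of_tendsto_log_div_log (haN_pos : ∀ N, 0 < aN N) (hscale : HasScale aN a)
    {θ : ℕ → ℕ} (hθ : Tendsto θ atTop atTop) {x : ℕ → ℝ} (hx : ∀ k, aN (θ k) ≤ x k) {L : ℝ}
    (hlim : Tendsto (fun k => log (x k) / log (θ k)) atTop (𝓝 L)) : -a ≤ L := by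
  refine le_of_tendsto_of_tendsto
    (((hasScale_iff_tendsto_log_div_log haN_pos).1 hscale).comp hθ) hlim ?_
  filter_upwards [hθ.eventually (eventually_ge_atTop 2)] with k hk
  have hk : (1 : ℝ) < θ k := by exact_mod_cast hk
  exact div_le_div_of_nonneg_right (log_le_log (haN_pos _) (hx k)) (log_pos hk).le

lemma exists_subseq_tendsto_log_div_log (haN_pos : ∀ N, 0 < aN N) (hscale : HasScale aN a)
    {Q : ℕ → ℝ × ℝ → Prop}
    (hQ : ∃ᶠ N in atTop, ∃ z ∈ Icc (aN N) 1 ×ˢ Icc (aN N) 1, Q N z) :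
    ∃ θ : ℕ → ℕ, StrictMono θ ∧ ∃ z : ℕ → ℝ × ℝ,
      (∀ k, z k ∈ Icc (aN (θ k)) 1 ×ˢ Icc (aN (θ k)) 1 ∧ Q (θ k) (z k)) ∧
      ∃ s₁ ∈ Icc 0 a, ∃ s₂ ∈ Icc 0 a,
        Tendsto (fun k => log (z k).1 / log (θ k)) atTop (𝓝 (-s₁)) ∧
        Tendsto (fun k => log (z k).2 / log (θ k)) atTop (𝓝 (-s₂)) := by
  obtain ⟨θ, hθ, hθQ⟩ := extraction_of_frequently_atTop (hQ.and_eventually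
    ((eventually_ge_atTop 2).and (eventually_rpow_le_of_hasScale haN_pos hscale)))
  choose z hz hQz using fun k => (hθQ k).1
  have hr : ∀ k, (log (z k).1 / log (θ k), log (z k).2 / log (θ k)) ∈
      Icc (-a - 1) 0 ×ˢ Icc (-a - 1) 0 := by
    intro k
    obtain ⟨hθ2, haN⟩ := (hθQ k).2
    have hθ1 : (1 : ℝ) < θ k := by exact_mod_cast hθ2
    exact ⟨log_div_log_mem_Icc hθ1 (haN.trans (hz k).1.1) (hz k).1.2,
      log_div_log_mem_Icc hθ1 (haN.trans (hz k).2.1) (hz k).2.2⟩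
  obtain ⟨p, hp, ψ, hψ, hlim⟩ := (isCompact_Icc.prod isCompact_Icc).tendsto_subseq hr
  have hθψ := (hθ.comp hψ).tendsto_atTop
  have hlim₁ := (continuous_fst.tendsto p).comp hlim
  have hlim₂ := (continuous_snd.tendsto p).comp hlim
  have hp₁ := neg_le_of_tendsto_log_div_log haN_pos hscale hθψ (fun k => (hz (ψ k)).1.1) hlim₁
  have hp₂ := neg_le_of_tendsto_log_div_log haN_pos hscale hθψ (fun k => (hz (ψ k)).2.1) hlim₂
  refine ⟨θ ∘ ψ, hθ.comp hψ, z ∘ ψ, fun k => ⟨hz (ψ k), hQz (ψ k)⟩,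
    -p.1, ⟨by linarith [hp.1.2], by linarith⟩, -p.2, ⟨by linarith [hp.2.2], by linarith⟩, ?_, ?_⟩
  · rw [neg_neg]; exact hlim₁
  · rw [neg_neg]; exact hlim₂

lemma exists_frequently_profile_bound (hprof : HasScalingProfile2 g S)
    (haN_pos : ∀ N, 0 < aN N) (hscale : HasScale aN a) {Q : ℕ → ℝ × ℝ → Prop}
    (hQ : ∃ᶠ N in atTop, ∃ z ∈ Icc (aN N) 1 ×ˢ Icc (aN N) 1, Q N z) :
    ∃ s₁ ∈ Icc 0 a, ∃ s₂ ∈ Icc 0 a, ∀ δ > 0, ∃ᶠ N : ℕ in atTop,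
      ∃ z ∈ Icc (aN N) 1 ×ˢ Icc (aN N) 1, Q N z ∧
        |g N z.1 z.2| ≤ (N : ℝ) ^ (-S s₁ s₂ + δ) ∧
        z.1 ≤ (N : ℝ) ^ (-s₁ + δ) ∧ z.2 ≤ (N : ℝ) ^ (-s₂ + δ) := by
  obtain ⟨θ, hθ, z, hz, s₁, hs₁, s₂, hs₂, hlim₁, hlim₂⟩ :=
    exists_subseq_tendsto_log_div_log haN_pos hscale hQ
  have hz_mem : ∀ k, (z k).1 ∈ Ioc (0 : ℝ) 1 ∧ (z k).2 ∈ Ioc (0 : ℝ) 1 := fun k =>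
    ⟨⟨(haN_pos _).trans_le (hz k).1.1.1, (hz k).1.1.2⟩,
      ⟨(haN_pos _).trans_le (hz k).1.2.1, (hz k).1.2.2⟩⟩
  obtain ⟨l₁, hl₁, hl₁s, hl₁θ⟩ := exists_hasScale_extend hθ (fun k => (hz_mem k).1) hs₁.1 hlim₁
  obtain ⟨l₂, hl₂, hl₂s, hl₂θ⟩ := exists_hasScale_extend hθ (fun k => (hz_mem k).2) hs₂.1 hlim₂
  have hG := hprof l₁ l₂ hl₁ hl₂ s₁ s₂ hs₁.1 hs₂.1 hl₁s hl₂s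
  refine ⟨s₁, hs₁, s₂, hs₂, fun δ hδ => hθ.tendsto_atTop.frequently (Eventually.frequently ?_)⟩
  filter_upwards [hθ.tendsto_atTop.eventually (hasScale_iff.1 hG δ hδ),
    hθ.tendsto_atTop.eventually (hasScale_iff.1 hl₁s δ hδ),
    hθ.tendsto_atTop.eventually (hasScale_iff.1 hl₂s δ hδ)] with k hgk hl₁k hl₂k
  simp only [hl₁θ, hl₂θ] at hgk hl₁k hl₂k
  exact ⟨z k, (hz k).1, (hz k).2, hgk.2, (le_abs_self _).trans hl₁k.2,
    (le_abs_self _).trans hl₂k.2⟩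

lemma eventually_abs_mul_mul_le_rpow (hprof : HasScalingProfile2 g S)
    (haN_pos : ∀ N, 0 < aN N) (hscale : HasScale aN a) {L : ℝ}
    (hL : ∀ s₁ ∈ Icc 0 a, ∀ s₂ ∈ Icc 0 a, L ≤ S s₁ s₂ + s₁ + s₂) {δ : ℝ} (hδ : 0 < δ) :
    ∀ᶠ N : ℕ in atTop, ∀ z ∈ Icc (aN N) 1 ×ˢ Icc (aN N) 1,
      |g N z.1 z.2| * (z.1 * z.2) ≤ (N : ℝ) ^ (-L + δ) := by
  by_contra h
  simp only [not_eventually, not_forall, not_le, exists_prop] at h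
  obtain ⟨s₁, hs₁, s₂, hs₂, hfreq⟩ := exists_frequently_profile_bound hprof haN_pos hscale h
  obtain ⟨N, ⟨z, hz, hlt, hg, hz₁, hz₂⟩, hN⟩ :=
    ((hfreq (δ / 4) (by positivity)).and_eventually (eventually_ge_atTop 2)).exists
  have hN : (1 : ℝ) < N := by exact_mod_cast hN
  have hN0 : (0 : ℝ) < N := by linarith
  have hz₁0 := (haN_pos N).le.trans hz.1.1
  have hz₂0 := (haN_pos N).le.trans hz.2.1
  have hLs := hL s₁ hs₁ s₂ hs₂
  have := calc
    |g N z.1 z.2| * (z.1 * z.2)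
      ≤ (N : ℝ) ^ (-S s₁ s₂ + δ / 4) * ((N : ℝ) ^ (-s₁ + δ / 4) * (N : ℝ) ^ (-s₂ + δ / 4)) := by
        gcongr
    _ = (N : ℝ) ^ (-(S s₁ s₂ + s₁ + s₂) + 3 * δ / 4) := by
        rw [← rpow_add hN0, ← rpow_add hN0]; ring_nf
    _ < (N : ℝ) ^ (-L + δ) := rpow_lt_rpow_of_exponent_lt hN (by linarith)
  linarith

lemma eventually_setIntegral_le_rpow (hprof : HasScalingProfile2 g S)
    (haN_pos : ∀ N, 0 < aN N) (ha : 0 < a) (hscale : HasScale aN a) {L : ℝ}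
    (hL : ∀ s₁ ∈ Icc 0 a, ∀ s₂ ∈ Icc 0 a, L ≤ S s₁ s₂ + s₁ + s₂) {δ : ℝ} (hδ : 0 < δ) :
    ∀ᶠ N : ℕ in atTop,
      ∫ z in Icc (aN N) 1 ×ˢ Icc (aN N) 1, |g N z.1 z.2| ≤ (N : ℝ) ^ (-L + δ) := by
  filter_upwards [eventually_abs_mul_mul_le_rpow hprof haN_pos hscale hL (half_pos hδ),
    eventually_log_sq_le_rpow haN_pos ha hscale (half_pos hδ),
    (tendsto_zero_of_hasScale hscale ha).eventually_le_const one_pos, eventually_gt_atTop 0]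
    with N hpt hlog haN1 hN
  have hN : (0 : ℝ) < N := by exact_mod_cast hN
  have hint : IntegrableOn (fun z : ℝ × ℝ => (N : ℝ) ^ (-L + δ / 2) * (z.1⁻¹ * z.2⁻¹))
      (Icc (aN N) 1 ×ˢ Icc (aN N) 1) := by
    refine ContinuousOn.integrableOn_compact (isCompact_Icc.prod isCompact_Icc) ?_
    refine continuousOn_const.mul ((continuousOn_fst.inv₀ fun z hz => ?_).mul
      (continuousOn_snd.inv₀ fun z hz => ?_))
    · exact ((haN_pos N).trans_le hz.1.1).ne'
    · exact ((haN_pos N).trans_le hz.2.1).ne'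
  calc ∫ z in Icc (aN N) 1 ×ˢ Icc (aN N) 1, |g N z.1 z.2|
      ≤ ∫ z in Icc (aN N) 1 ×ˢ Icc (aN N) 1, (N : ℝ) ^ (-L + δ / 2) * (z.1⁻¹ * z.2⁻¹) := by
        refine integral_mono_of_nonneg (.of_forall fun z => abs_nonneg _) hint ?_
        refine ae_restrict_of_forall_mem (measurableSet_Icc.prod measurableSet_Icc) fun z hz => ?_
        have hz₁ := (haN_pos N).trans_le hz.1.1
        have hz₂ := (haN_pos N).trans_le hz.2.1
        dsimp only
        rw [← mul_inv, ← div_eq_mul_inv, le_div_iff₀ (by positivity)]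
        exact hpt z hz
    _ = (N : ℝ) ^ (-L + δ / 2) * log (aN N) ^ 2 := by
        rw [integral_const_mul, setIntegral_inv_mul_inv (haN_pos N) haN1]
    _ ≤ (N : ℝ) ^ (-L + δ / 2) * (N : ℝ) ^ (δ / 2) :=
        mul_le_mul_of_nonneg_left hlog (rpow_nonneg hN.le _)
    _ = (N : ℝ) ^ (-L + δ) := by rw [← rpow_add hN]; ring_nf

lemma eventually_two_mul_max_le_one (ha : 0 < a) (hscale : HasScale aN a) {s : ℝ} (hs : 0 ≤ s) :
    ∀ᶠ N : ℕ in atTop, 2 * max (aN N) ((N : ℝ) ^ (-s) / 2) ≤ 1 := by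
  filter_upwards [(tendsto_zero_of_hasScale hscale ha).eventually_le_const one_half_pos,
    eventually_ge_atTop 1] with N haN hN
  have := rpow_le_one_of_one_le_of_nonpos (by exact_mod_cast hN : (1 : ℝ) ≤ N) (neg_nonpos.2 hs)
  rw [mul_max_of_nonneg _ _ zero_le_two]
  exact max_le (by linarith) (by linarith)

lemma hasScale_of_mem_Icc_max (hscale : HasScale aN a) {s : ℝ} (hs : s ∈ Icc 0 a) {x : ℕ → ℝ}
    (hx : ∀ᶠ N : ℕ in atTop, x N ∈ Icc (max (aN N) ((N : ℝ) ^ (-s) / 2))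
      (2 * max (aN N) ((N : ℝ) ^ (-s) / 2))) :
    HasScale x s := by
  refine hasScale_iff.2 fun δ hδ => ?_
  filter_upwards [hx, hasScale_iff.1 hscale (δ / 2) (half_pos hδ),
    eventually_const_mul_rpow_le 2 (-s - δ) hδ,
    eventually_const_mul_rpow_le 2 (-a + δ / 2) (half_pos hδ), eventually_ge_atTop 1]
    with N hxN haN hlow hup hN
  have hN : (1 : ℝ) ≤ N := by exact_mod_cast hN
  have hlow : (N : ℝ) ^ (-s - δ) ≤ (N : ℝ) ^ (-s) / 2 := by
    rw [sub_add_cancel] at hlow; linarith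
  have hx_pos : 0 < x N := (rpow_pos_of_pos (by linarith) _).trans_le
    (hlow.trans ((le_max_right _ _).trans hxN.1))
  rw [abs_of_pos hx_pos]
  refine ⟨hlow.trans ((le_max_right _ _).trans hxN.1), hxN.2.trans ?_⟩
  rw [mul_max_of_nonneg _ _ zero_le_two, mul_div_cancel₀ _ two_ne_zero]
  refine max_le ?_ (rpow_le_rpow_of_exponent_le hN (by linarith))
  calc 2 * aN N ≤ 2 * (N : ℝ) ^ (-a + δ / 2) := by gcongr; exact (le_abs_self _).trans haN.2
    _ ≤ (N : ℝ) ^ (-a + δ / 2 + δ / 2) := hup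
    _ ≤ (N : ℝ) ^ (-s + δ) := rpow_le_rpow_of_exponent_le hN (by linarith [hs.2])

lemma hasScale_min_one (ha : 0 < a) (hscale : HasScale aN a) {s : ℝ} (hs : s ∈ Icc 0 a)
    {x : ℕ → ℝ} (hx : ∀ N, x N ∈ Icc (max (aN N) ((N : ℝ) ^ (-s) / 2))
      (2 * max (aN N) ((N : ℝ) ^ (-s) / 2))) :
    HasScale (fun N => min (x N) 1) s := by
  refine hasScale_of_mem_Icc_max hscale hs ?_
  filter_upwards [eventually_two_mul_max_le_one ha hscale hs.1] with N hN
  rw [min_eq_left ((hx N).2.trans hN)]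
  exact hx N

lemma eventually_rpow_le_setIntegral (hprof : HasScalingProfile2 g S)
    (hint : ∀ N, IntegrableOn (fun z : ℝ × ℝ => |g N z.1 z.2|) (Icc (aN N) 1 ×ˢ Icc (aN N) 1))
    (haN_pos : ∀ N, 0 < aN N) (ha : 0 < a) (hscale : HasScale aN a)
    {s₁ s₂ : ℝ} (hs₁ : s₁ ∈ Icc 0 a) (hs₂ : s₂ ∈ Icc 0 a) {δ : ℝ} (hδ : 0 < δ) :
    ∀ᶠ N : ℕ in atTop, (N : ℝ) ^ (-(S s₁ s₂ + s₁ + s₂) - δ) ≤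
      ∫ z in Icc (aN N) 1 ×ˢ Icc (aN N) 1, |g N z.1 z.2| := by
  set u₁ : ℕ → ℝ := fun N => max (aN N) ((N : ℝ) ^ (-s₁) / 2)
  set u₂ : ℕ → ℝ := fun N => max (aN N) ((N : ℝ) ^ (-s₂) / 2)
  set B : ℕ → Set (ℝ × ℝ) := fun N => Icc (u₁ N) (2 * u₁ N) ×ˢ Icc (u₂ N) (2 * u₂ N)
  have hu₁ : ∀ N, 0 < u₁ N := fun N => lt_max_of_lt_left (haN_pos N)
  have hu₂ : ∀ N, 0 < u₂ N := fun N => lt_max_of_lt_left (haN_pos N)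
  have hq : ∀ N, ∃ q ∈ B N, B N ⊆ Icc (aN N) 1 ×ˢ Icc (aN N) 1 →
      |g N q.1 q.2| * (u₁ N * u₂ N) ≤ ∫ z in B N, |g N z.1 z.2| := by
    intro N
    by_cases hBN : B N ⊆ Icc (aN N) 1 ×ˢ Icc (aN N) 1
    · obtain ⟨q, hq, hle⟩ :=
        exists_mul_le_setIntegral_Icc_prod_Icc (hu₁ N) (hu₂ N) ((hint N).mono_set hBN)
      exact ⟨q, hq, fun _ => hle⟩
    · exact ⟨(u₁ N, u₂ N), ⟨⟨le_rfl, by linarith [hu₁ N]⟩, le_rfl, by linarith [hu₂ N]⟩,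
        fun h => absurd h hBN⟩
  choose q hqB hq using hq
  have hG := hprof _ _
    (fun N => ⟨lt_min ((hu₁ N).trans_le (hqB N).1.1) one_pos, min_le_right _ _⟩)
    (fun N => ⟨lt_min ((hu₂ N).trans_le (hqB N).2.1) one_pos, min_le_right _ _⟩)
    s₁ s₂ hs₁.1 hs₂.1 (hasScale_min_one ha hscale hs₁ fun N => (hqB N).1)
    (hasScale_min_one ha hscale hs₂ fun N => (hqB N).2)
  filter_upwards [eventually_two_mul_max_le_one ha hscale hs₁.1,
    eventually_two_mul_max_le_one ha hscale hs₂.1, hasScale_iff.1 hG (δ / 2) (half_pos hδ),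
    eventually_const_mul_rpow_le 4 (-(S s₁ s₂ + s₁ + s₂) - δ) (half_pos hδ),
    eventually_gt_atTop 0] with N hu₁N hu₂N hgN hconst hN
  have hN : (0 : ℝ) < N := by exact_mod_cast hN
  have hBN : B N ⊆ Icc (aN N) 1 ×ˢ Icc (aN N) 1 :=
    prod_mono (Icc_subset_Icc (le_max_left _ _) hu₁N) (Icc_subset_Icc (le_max_left _ _) hu₂N)
  rw [min_eq_left ((hqB N).1.2.trans hu₁N), min_eq_left ((hqB N).2.2.trans hu₂N)] at hgN
  have hsplit : (N : ℝ) ^ (-(S s₁ s₂ + s₁ + s₂) - δ + δ / 2) =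
      (N : ℝ) ^ (-S s₁ s₂ - δ / 2) * (N : ℝ) ^ (-s₁) * (N : ℝ) ^ (-s₂) := by
    rw [← rpow_add hN, ← rpow_add hN]; ring_nf
  calc (N : ℝ) ^ (-(S s₁ s₂ + s₁ + s₂) - δ)
      ≤ (N : ℝ) ^ (-(S s₁ s₂ + s₁ + s₂) - δ + δ / 2) / 4 := by linarith
    _ = (N : ℝ) ^ (-S s₁ s₂ - δ / 2) * ((N : ℝ) ^ (-s₁) / 2 * ((N : ℝ) ^ (-s₂) / 2)) := by
        rw [hsplit]; ring
    _ ≤ |g N (q N).1 (q N).2| * (u₁ N * u₂ N) := by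
        gcongr
        · exact hgN.1
        · exact le_max_right _ _
        · exact le_max_right _ _
    _ ≤ ∫ z in B N, |g N z.1 z.2| := hq N hBN
    _ ≤ ∫ z in Icc (aN N) 1 ×ˢ Icc (aN N) 1, |g N z.1 z.2| :=
        setIntegral_mono_set (hint N) (.of_forall fun z => abs_nonneg _) hBN.eventuallyLE

lemma bddBelow_image_profile (hprof : HasScalingProfile2 g S)
    (hint : ∀ N, IntegrableOn (fun z : ℝ × ℝ => |g N z.1 z.2|) (Icc (aN N) 1 ×ˢ Icc (aN N) 1))
    (haN_pos : ∀ N, 0 < aN N) (ha : 0 < a) (hscale : HasScale aN a) :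
    BddBelow ((fun p : ℝ × ℝ => S p.1 p.2 + p.1 + p.2) '' (Icc 0 a ×ˢ Icc 0 a)) := by
  by_contra hunb
  have hmax : ∀ᶠ N : ℕ in atTop, ∃ z ∈ Icc (aN N) 1 ×ˢ Icc (aN N) 1,
      ∫ z in Icc (aN N) 1 ×ˢ Icc (aN N) 1, |g N z.1 z.2| ≤ |g N z.1 z.2| := by
    filter_upwards [(tendsto_zero_of_hasScale hscale ha).eventually_lt_const one_pos] with N hN
    have hvol : volume.real (Icc (aN N) 1 ×ˢ Icc (aN N) 1) = (1 - aN N) ^ 2 := by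
      rw [Measure.volume_eq_prod, measureReal_prod_prod, volume_real_Icc_of_le hN.le, sq]
    have hvol_le : (1 - aN N) ^ 2 ≤ 1 := by nlinarith [haN_pos N]
    obtain ⟨z, hz, hle⟩ :=
      exists_setIntegral_le_mul_measureReal (by rw [hvol]; nlinarith) (hint N)
    rw [hvol] at hle
    exact ⟨z, hz, hle.trans (mul_le_of_le_one_right (abs_nonneg _) hvol_le)⟩
  obtain ⟨s₁, -, s₂, -, hfreq⟩ :=
    exists_frequently_profile_bound hprof haN_pos hscale hmax.frequently
  obtain ⟨_, ⟨p, hp, rfl⟩, hlt⟩ := not_bddBelow_iff.1 hunb (S s₁ s₂ - 2)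
  obtain ⟨N, ⟨z, -, hI, hg, -⟩, hlow, hN⟩ := ((hfreq 1 one_pos).and_eventually
    ((eventually_rpow_le_setIntegral hprof hint haN_pos ha hscale hp.1 hp.2 one_pos).and
      (eventually_ge_atTop 2))).exists
  have hN : (1 : ℝ) < N := by exact_mod_cast hN
  have := rpow_lt_rpow_of_exponent_lt hN
    (by linarith : -S s₁ s₂ + 1 < -(S p.1 p.2 + p.1 + p.2) - 1)
  linarith

end ScalingProfile

theorem scale_of_double_integral_general (g : ℕ → ℝ → ℝ → ℝ) (S : ℝ → ℝ → ℝ) (a : ℝ) (aN : ℕ → ℝ)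
    (hprof : HasScalingProfile2 g S)
    (hint : ∀ N, IntegrableOn (Function.uncurry (g N))
      (Set.Icc (aN N) 1 ×ˢ Set.Icc (aN N) 1))
    (haN_pos : ∀ N, 0 < aN N)
    (ha : 0 < a) (hscale : HasScale aN a) :
    HasScale (fun N => ∫ lam1 in Set.Icc (aN N) 1, ∫ lam2 in Set.Icc (aN N) 1,
        |g N lam1 lam2|)
      (sInf ((fun p : ℝ × ℝ => S p.1 p.2 + p.1 + p.2) '' (Set.Icc 0 a ×ˢ Set.Icc 0 a))) := by
  have hint' : ∀ N, IntegrableOn (fun z : ℝ × ℝ => |g N z.1 z.2|)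
      (Icc (aN N) 1 ×ˢ Icc (aN N) 1) := fun N => (hint N).abs
  have hiter : ∀ N, ∫ lam1 in Icc (aN N) 1, ∫ lam2 in Icc (aN N) 1, |g N lam1 lam2| =
      ∫ z in Icc (aN N) 1 ×ˢ Icc (aN N) 1, |g N z.1 z.2| := fun N => by
    rw [Measure.volume_eq_prod, setIntegral_prod _ (hint' N)]
  have hbdd := bddBelow_image_profile hprof hint' haN_pos ha hscale
  have hne := ((nonempty_Icc.2 ha.le).prod (nonempty_Icc.2 ha.le)).image
    fun p : ℝ × ℝ => S p.1 p.2 + p.1 + p.2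
  simp only [hiter]
  refine hasScale_iff.2 fun δ hδ => ?_
  obtain ⟨_, ⟨p, hp, rfl⟩, hpM⟩ := Real.lt_sInf_add_pos hne (half_pos hδ)
  filter_upwards [eventually_rpow_le_setIntegral hprof hint' haN_pos ha hscale hp.1 hp.2
      (half_pos hδ),
    eventually_setIntegral_le_rpow hprof haN_pos ha hscale
      (fun s₁ hs₁ s₂ hs₂ => csInf_le hbdd ⟨(s₁, s₂), ⟨hs₁, hs₂⟩, rfl⟩) hδ,
    eventually_ge_atTop 1] with N hlow hupp hN
  rw [abs_of_nonneg (setIntegral_nonneg (measurableSet_Icc.prod measurableSet_Icc)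
    fun _ _ => abs_nonneg _)]
  exact ⟨(rpow_le_rpow_of_exponent_le (by exact_mod_cast hN) (by linarith)).trans hlow, hupp⟩

/-- scale of the double integrals `∫_{a_N}^1 ∫_{a_N}^1 |g_N(λ₁,λ₂)| dλ₁ dλ₂`
for a sequence of two-variable functions with scaling profile `S` and a lower limit
sequence `a_N` of scale `a > 0`. -/
theorem scale_of_double_integral (g : ℕ → ℝ → ℝ → ℝ) (S : ℝ → ℝ → ℝ) (a : ℝ) (aN : ℕ → ℝ)
    (hmeas : ∀ N, Measurable (Function.uncurry (g N)))
    (hprof : HasScalingProfile2 g S)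
    (hint : ∀ N, IntegrableOn (Function.uncurry (g N))
      (Set.Icc (aN N) 1 ×ˢ Set.Icc (aN N) 1))
    (haN_pos : ∀ N, 0 < aN N) (haN_le : ∀ N, aN N ≤ 1)
    (ha : 0 < a) (hscale : HasScale aN a) :
    HasScale (fun N => ∫ lam1 in Set.Icc (aN N) 1, ∫ lam2 in Set.Icc (aN N) 1,
        |g N lam1 lam2|)
      (sInf ((fun p : ℝ × ℝ => S p.1 p.2 + p.1 + p.2) '' (Set.Icc 0 a ×ˢ Set.Icc 0 a))) :=
  scale_of_double_integral_general g S a aN hprof hint haN_pos ha hscale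
end

section
/- Fix ν > 1 and κ > 0, let η_N > 0 have scale s_η ≥ 0, and let h_N(λ) = λ/(λ+η_N), so that S^{(h)}(s) = max(s − s_η, 0) and S^{(1−h)}(s) = max(s_η − s, 0). Then: condition (1) [S^{(h)}(s) ≥ (1/2)(s/ν − 1/(κ+1)) for all s ∈ [ν/(κ+1), ν]] holds if and only if s_η ≤ ν/(κ+1); condition (2) [S^{(1−h)}(s) ≥ (1/2)(κ/(κ+1) − (κ/ν)s) for all s ∈ [0, ν/(κ+1)]] holds if and only if s_η ≥ ν/(κ+1) when κ ≤ 2ν, and if and only if s_η ≥ κ/(2(κ+1)) when κ > 2ν. Consequently, when κ ≤ 2ν conditions (1) and (2) hold simultaneously if and only if s_η = ν/(κ+1), while when κ > 2ν they cannot hold simultaneously for any s_η, so KRR cannot attain the optimal NMNO loss scaling κ/(κ+1) in the saturated case κ > 2ν. -/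
/-!
Both conditions compare an affine function of `s` with a hinge `max (±(s - sη)) 0` of slope `±1`.
In (1) the affine side rises from `0` at `ν/(κ+1)` with slope `1/(2ν) < 1`, so it stays below the
hinge iff the hinge is already active there, i.e. `sη ≤ ν/(κ+1)`. In (2) it falls to `0` at
`ν/(κ+1)` with slope `-κ/(2ν)`; where the hinge is active the difference of the two sides is
affine, so (2) reduces to its two endpoint conditions `ν/(κ+1) ≤ sη` and `κ/(2(κ+1)) ≤ sη`.
The second one is the binding one exactly when `κ > 2ν`, and it is then incompatible with (1).
-/

open Set

section Hinge

variable {a b c t : ℝ}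

theorem forall_Icc_rising_le_hinge_iff (hab : a < b) (hc₀ : 0 < c) (hc₁ : c ≤ 1) :
    (∀ s ∈ Icc a b, c * (s - a) ≤ max (s - t) 0) ↔ t ≤ a := by
  refine ⟨fun h => ?_, fun hta s hs => ?_⟩
  · by_contra! hat
    have hle := h (min t b) ⟨le_min hat.le hab.le, min_le_right _ _⟩
    rw [max_eq_right (sub_nonpos.2 (min_le_left t b))] at hle
    have hpos : 0 < c * (min t b - a) := mul_pos hc₀ (sub_pos.2 (lt_min hat hab))
    linarith
  · calc c * (s - a) ≤ s - a := mul_le_of_le_one_left (sub_nonneg.2 hs.1) hc₁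
      _ ≤ s - t := by linarith
      _ ≤ max (s - t) 0 := le_max_left _ _

theorem forall_Icc_falling_le_hinge_iff (ha : 0 < a) (hc : 0 < c) :
    (∀ s ∈ Icc 0 a, c * (a - s) ≤ max (t - s) 0) ↔ a ≤ t ∧ c * a ≤ t := by
  refine ⟨fun h => ⟨?_, ?_⟩, fun ⟨hat, hcat⟩ s hs => le_max_of_le_left ?_⟩
  · by_contra! hta
    have hle := h (max t 0) ⟨le_max_right _ _, max_le hta.le ha.le⟩
    rw [max_eq_right (sub_nonpos.2 (le_max_left t 0))] at hle
    have hpos : 0 < c * (a - max t 0) := mul_pos hc (sub_pos.2 (max_lt hta ha))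
    linarith
  · have h₀ := h 0 ⟨le_rfl, ha.le⟩
    rw [sub_zero, sub_zero] at h₀
    rcases le_total t 0 with ht | ht
    · rw [max_eq_right ht] at h₀
      linarith [mul_pos hc ha]
    · rwa [max_eq_left ht] at h₀
  · -- `a` times the difference interpolates its values at the endpoints `s = 0` and `s = a`
    have hinterp : a * (c * (a - s) - (t - s)) = (a - s) * (c * a - t) + s * (a - t) := by ring
    nlinarith [mul_nonpos_of_nonneg_of_nonpos (sub_nonneg.2 hs.2) (sub_nonpos.2 hcat),
      mul_nonpos_of_nonneg_of_nonpos hs.1 (sub_nonpos.2 hat)]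

end Hinge

theorem krr_optimality_saturation_general (ν κ sη : ℝ) (hν : 1 < ν) (hκ : 0 < κ) :
    ((∀ s ∈ Set.Icc (ν / (κ + 1)) ν,
        1 / 2 * (s / ν - 1 / (κ + 1)) ≤ max (s - sη) 0) ↔ sη ≤ ν / (κ + 1)) ∧
    (κ ≤ 2 * ν →
      ((∀ s ∈ Set.Icc (0 : ℝ) (ν / (κ + 1)),
        1 / 2 * (κ / (κ + 1) - κ / ν * s) ≤ max (sη - s) 0) ↔ ν / (κ + 1) ≤ sη)) ∧
    (2 * ν < κ →
      ((∀ s ∈ Set.Icc (0 : ℝ) (ν / (κ + 1)),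
        1 / 2 * (κ / (κ + 1) - κ / ν * s) ≤ max (sη - s) 0) ↔ κ / (2 * (κ + 1)) ≤ sη)) ∧
    (κ ≤ 2 * ν →
      (((∀ s ∈ Set.Icc (ν / (κ + 1)) ν,
          1 / 2 * (s / ν - 1 / (κ + 1)) ≤ max (s - sη) 0) ∧
        (∀ s ∈ Set.Icc (0 : ℝ) (ν / (κ + 1)),
          1 / 2 * (κ / (κ + 1) - κ / ν * s) ≤ max (sη - s) 0)) ↔ sη = ν / (κ + 1))) ∧
    (2 * ν < κ →
      ¬((∀ s ∈ Set.Icc (ν / (κ + 1)) ν,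
          1 / 2 * (s / ν - 1 / (κ + 1)) ≤ max (s - sη) 0) ∧
        (∀ s ∈ Set.Icc (0 : ℝ) (ν / (κ + 1)),
          1 / 2 * (κ / (κ + 1) - κ / ν * s) ≤ max (sη - s) 0))) := by
  have hν₀ : 0 < ν := by linarith
  have hκ₁ : 0 < κ + 1 := by linarith
  have hrise (s : ℝ) : 1 / 2 * (s / ν - 1 / (κ + 1)) = (2 * ν)⁻¹ * (s - ν / (κ + 1)) := by
    field_simp
  have hfall (s : ℝ) : 1 / 2 * (κ / (κ + 1) - κ / ν * s) = κ / (2 * ν) * (ν / (κ + 1) - s) := by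
    field_simp
  have hslope : κ / (2 * ν) * (ν / (κ + 1)) = κ / (2 * (κ + 1)) := by field_simp
  simp only [hrise, hfall]
  rw [forall_Icc_rising_le_hinge_iff (div_lt_self hν₀ (by linarith)) (by positivity)
      (inv_le_one_of_one_le₀ (by linarith)),
    forall_Icc_falling_le_hinge_iff (by positivity) (by positivity), hslope]
  have hcmp : κ / (2 * (κ + 1)) ≤ ν / (κ + 1) ↔ κ ≤ 2 * ν := by
    rw [← div_div, div_le_div_iff_of_pos_right hκ₁, div_le_iff₀ two_pos, mul_comm]
  have hlt (h : 2 * ν < κ) : ν / (κ + 1) < κ / (2 * (κ + 1)) := not_le.1 (mt hcmp.1 (not_le.2 h))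
  refine ⟨Iff.rfl, fun h => and_iff_left_of_imp (hcmp.2 h).trans,
    fun h => and_iff_right_of_imp fun h' => (hlt h).le.trans h', fun h => ?_,
    fun h ⟨h₁, _, h₃⟩ => (hlt h).not_ge (h₃.trans h₁)⟩
  exact ⟨fun ⟨h₁, h₂, _⟩ => le_antisymm h₁ h₂, fun e => ⟨e.le, e.ge, (hcmp.2 h).trans e.ge⟩⟩

/-- analysis of the NMNO optimality conditions (1) and (2) for the KRR
scaling profiles `S^{(h)}(s) = max(s − s_η, 0)` and `S^{(1−h)}(s) = max(s_η − s, 0)`: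
condition (1) holds iff `s_η ≤ ν/(κ+1)`; condition (2) holds iff `s_η ≥ ν/(κ+1)` when
`κ ≤ 2ν` and iff `s_η ≥ κ/(2(κ+1))` when `κ > 2ν`; consequently when `κ ≤ 2ν` both hold
iff `s_η = ν/(κ+1)`, while when `κ > 2ν` (saturation) they can never hold simultaneously,
so KRR cannot attain the optimal NMNO loss scaling `κ/(κ+1)`. -/
theorem krr_optimality_saturation (ν κ sη : ℝ) (hν : 1 < ν) (hκ : 0 < κ) (hsη : 0 ≤ sη) :
    ((∀ s ∈ Set.Icc (ν / (κ + 1)) ν,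
        1 / 2 * (s / ν - 1 / (κ + 1)) ≤ max (s - sη) 0) ↔ sη ≤ ν / (κ + 1)) ∧
    (κ ≤ 2 * ν →
      ((∀ s ∈ Set.Icc (0 : ℝ) (ν / (κ + 1)),
        1 / 2 * (κ / (κ + 1) - κ / ν * s) ≤ max (sη - s) 0) ↔ ν / (κ + 1) ≤ sη)) ∧
    (2 * ν < κ →
      ((∀ s ∈ Set.Icc (0 : ℝ) (ν / (κ + 1)),
        1 / 2 * (κ / (κ + 1) - κ / ν * s) ≤ max (sη - s) 0) ↔ κ / (2 * (κ + 1)) ≤ sη)) ∧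
    (κ ≤ 2 * ν →
      (((∀ s ∈ Set.Icc (ν / (κ + 1)) ν,
          1 / 2 * (s / ν - 1 / (κ + 1)) ≤ max (s - sη) 0) ∧
        (∀ s ∈ Set.Icc (0 : ℝ) (ν / (κ + 1)),
          1 / 2 * (κ / (κ + 1) - κ / ν * s) ≤ max (sη - s) 0)) ↔ sη = ν / (κ + 1))) ∧
    (2 * ν < κ →
      ¬((∀ s ∈ Set.Icc (ν / (κ + 1)) ν,
          1 / 2 * (s / ν - 1 / (κ + 1)) ≤ max (s - sη) 0) ∧
        (∀ s ∈ Set.Icc (0 : ℝ) (ν / (κ + 1)),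
          1 / 2 * (κ / (κ + 1) - κ / ν * s) ≤ max (sη - s) 0))) :=
  krr_optimality_saturation_general ν κ sη hν hκ
end

section
/- Fix ν > 1, κ > 0 and σ² > 0. Let t_N > 0 be a sequence such that 1/t_N has scale ν/(κ+1), and consider the gradient-flow profile h_N(λ) = 1 − e^{−t_N λ} on (0,1]. Then the NMNO loss L^{nmno}_N[h_N] has scale exactly κ/(κ+1); in particular, for every scale s ∈ [0,ν], any sequence λ_N of scale s satisfies that |h_N(λ_N)| has scale not less than (1/2)(s/ν − 1/(κ+1)) for s ≥ ν/(κ+1) and |1−h_N(λ_N)| has scale not less than (1/2)(κ/(κ+1) − (κ/ν)s) for s ≤ ν/(κ+1), so gradient flow with optimally scaled stopping time exhibits no saturation for any ν > 1 and κ > 0. -/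
open Filter Asymptotics MeasureTheory

/-- The NMNO (naive model of noisy observations) loss functional with power-law
measures `μ_λ(dλ) = (1/ν) λ^{-1-1/ν} dλ`, `μ_c(dλ) = (1/ν) λ^{κ/ν-1} dλ`, noise level
`σ²` and `λ_min = (N+1)^{-ν}` (so that `μ_λ([λ_min,1]) = N`). -/
noncomputable def nmnoLoss (ν κ σ2 : ℝ) (N : ℕ) (h : ℝ → ℝ) : ℝ :=
  σ2 / (2 * N) *
      ∫ lam in Set.Icc ((N + 1 : ℝ) ^ (-ν)) 1, (h lam) ^ 2 * (1 / ν * lam ^ (-1 - 1 / ν)) +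
    1 / 2 *
      ∫ lam in Set.Icc ((N + 1 : ℝ) ^ (-ν)) 1, (1 - h lam) ^ 2 * (1 / ν * lam ^ (κ / ν - 1))

/-!
Write `q = ν / (κ + 1)`, so that `t_N ≈ N^q` up to factors `N^{±ε}`. Scales behave like
exponents: they add under products, scale under powers, change sign under inversion, and
take the minimum under sums; every claim then follows from an elementary pointwise bound.
Pointwise, `1 - e^{-x} ≤ x^{1/(2ν)}` and `e^{-x} ≤ (p/x)^p` with `p = κ/(2ν)`, and `t_N λ_N`
has scale `s - q`. For the loss, the variance integral `∫ (1 - e^{-tλ})² dμ_λ` is at most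
`t^w / (νw - 1)` for every `w ∈ (1/ν, 2]` (from `(1 - e^{-x})² ≤ x^w`) and at least
`(1 - e^{-1})² (t^{1/ν} - 1)` (restrict to `λ ≥ 1/t`), while the bias term is bounded;
after division by `N` both bounds give scale `1 - q/ν = κ/(κ+1)`.
-/

open Real Topology

lemma isLittleO_natCast_rpow_rpow {a b : ℝ} (hab : a < b) :
    (fun N : ℕ => (N : ℝ) ^ a) =o[atTop] fun N : ℕ => (N : ℝ) ^ b := by
  have hlim : Tendsto (fun N : ℕ => (N : ℝ) ^ (a - b)) atTop (𝓝 0) :=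
    (tendsto_rpow_neg_atTop (by linarith : 0 < b - a)).comp tendsto_natCast_atTop_atTop
      |>.congr fun N => by simp only [Function.comp_apply, neg_sub]
  have := ((isLittleO_one_iff ℝ).2 hlim).mul_isBigO (isBigO_refl (fun N : ℕ => (N : ℝ) ^ b) _)
  refine (this.congr' ?_ (by simp)).congr_left fun _ => rfl
  filter_upwards [eventually_gt_atTop 0] with N hN
  rw [← rpow_add (by exact_mod_cast hN), sub_add_cancel]

lemma isBigO_natCast_rpow_rpow {a b : ℝ} (hab : a ≤ b) :
    (fun N : ℕ => (N : ℝ) ^ a) =O[atTop] fun N : ℕ => (N : ℝ) ^ b := by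
  refine IsBigO.of_bound' ?_
  filter_upwards [eventually_ge_atTop 1] with N hN
  have hN : (1 : ℝ) ≤ N := by exact_mod_cast hN
  rw [norm_of_nonneg (by positivity), norm_of_nonneg (by positivity)]
  exact rpow_le_rpow_of_exponent_le hN hab

lemma natCast_rpow_mul_rpow (a b : ℝ) :
    (fun N : ℕ => (N : ℝ) ^ a * (N : ℝ) ^ b) =ᶠ[atTop]
      fun N : ℕ => (N : ℝ) ^ (a + b) := by
  filter_upwards [eventually_gt_atTop 0] with N hN
  rw [rpow_add (by exact_mod_cast hN)]

namespace ScaleAtLeast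

variable {a b : ℕ → ℝ} {s r : ℝ}

lemma of_forall_lt (h : ∀ r < s, ScaleAtLeast a r) : ScaleAtLeast a s := fun ε hε => by
  convert h (s - ε / 2) (by linarith) (ε / 2) (by linarith) using 3
  ring

lemma mono (h : ScaleAtLeast a s) (hrs : r ≤ s) : ScaleAtLeast a r := fun ε hε =>
  (h ε hε).trans_isBigO (isBigO_natCast_rpow_rpow (by linarith))

lemma of_abs_le (hb : ScaleAtLeast b s) (h : ∀ᶠ N in atTop, |a N| ≤ |b N|) :
    ScaleAtLeast a s := fun ε hε =>
  (IsBigO.of_bound' (by simpa only [norm_eq_abs, abs_abs] using h)).trans_isLittleO (hb ε hε)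

lemma add (ha : ScaleAtLeast a s) (hb : ScaleAtLeast b s) :
    ScaleAtLeast (fun N => a N + b N) s := fun ε hε =>
  (IsBigO.of_bound' (Eventually.of_forall fun N => by
    simpa [norm_eq_abs, abs_abs, abs_of_nonneg (add_nonneg (abs_nonneg (a N)) (abs_nonneg (b N)))]
      using abs_add_le (a N) (b N))).trans_isLittleO ((ha ε hε).add (hb ε hε))

lemma const_mul (h : ScaleAtLeast a s) (c : ℝ) : ScaleAtLeast (fun N => c * a N) s :=
  fun ε hε => by simpa only [abs_mul] using (h ε hε).const_mul_left |c|

lemma mul (ha : ScaleAtLeast a s) (hb : ScaleAtLeast b r) :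
    ScaleAtLeast (fun N => a N * b N) (s + r) := fun ε hε => by
  have := ((ha (ε / 2) (by linarith)).mul (hb (ε / 2) (by linarith))).congr'
    (Eventually.of_forall fun N => (abs_mul (a N) (b N)).symm) (natCast_rpow_mul_rpow _ _)
  refine this.congr_right fun N => ?_
  ring_nf

lemma rpow (h : ScaleAtLeast a s) {p : ℝ} (hp : 0 < p) :
    ScaleAtLeast (fun N => |a N| ^ p) (p * s) := fun ε hε => by
  have := (h (ε / p) (by positivity)).rpow hp (Eventually.of_forall fun N => by positivity)
  refine this.congr (fun N => by simp [abs_of_nonneg (rpow_nonneg (abs_nonneg _) _)])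
    fun N => ?_
  rw [← rpow_mul (Nat.cast_nonneg N)]
  congr 1
  field_simp

lemma inv (h : ScaleAtLeast a s) (ha : ∀ N, a N ≠ 0) :
    ScaleAtMost (fun N => (a N)⁻¹) (-s) := fun ε hε => by
  have := (h ε hε).inv_rev (Eventually.of_forall fun N h0 => absurd h0 (abs_ne_zero.2 (ha N)))
  refine this.congr (fun N => ?_) fun N => (abs_inv _).symm
  rw [← rpow_neg (Nat.cast_nonneg N)]
  ring_nf

lemma eventually_abs_le_s8 (h : ScaleAtLeast a s) (hr : -s < r) :
    ∀ᶠ N in atTop, |a N| ≤ (N : ℝ) ^ r := by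
  filter_upwards [(h (s + r) (by linarith)).bound one_pos] with N hN
  rwa [one_mul, norm_of_nonneg (rpow_nonneg (Nat.cast_nonneg N) _), norm_eq_abs, abs_abs,
    neg_add_cancel_left] at hN

end ScaleAtLeast

namespace ScaleAtMost

variable {a b : ℕ → ℝ} {s r : ℝ}

lemma of_abs_le (hb : ScaleAtMost b s) (h : ∀ᶠ N in atTop, |b N| ≤ |a N|) :
    ScaleAtMost a s := fun ε hε =>
  (hb ε hε).trans_isBigO (IsBigO.of_bound' (by simpa only [norm_eq_abs, abs_abs] using h))

lemma const_mul (h : ScaleAtMost a s) {c : ℝ} (hc : c ≠ 0) :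
    ScaleAtMost (fun N => c * a N) s :=
  fun ε hε => by simpa only [abs_mul] using (h ε hε).const_mul_right (abs_ne_zero.2 hc)

lemma mul (ha : ScaleAtMost a s) (hb : ScaleAtMost b r) :
    ScaleAtMost (fun N => a N * b N) (s + r) := fun ε hε => by
  have := ((ha (ε / 2) (by linarith)).mul (hb (ε / 2) (by linarith))).congr'
    (natCast_rpow_mul_rpow _ _) (Eventually.of_forall fun N => (abs_mul (a N) (b N)).symm)
  refine this.congr_left fun N => ?_
  ring_nf

lemma rpow (h : ScaleAtMost a s) {p : ℝ} (hp : 0 < p) :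
    ScaleAtMost (fun N => |a N| ^ p) (p * s) := fun ε hε => by
  have := (h (ε / p) (by positivity)).rpow hp (Eventually.of_forall fun N => abs_nonneg _)
  refine this.congr (fun N => ?_) (fun N => by simp [abs_of_nonneg (rpow_nonneg (abs_nonneg _) _)])
  rw [← rpow_mul (Nat.cast_nonneg N)]
  congr 1
  field_simp

lemma inv (h : ScaleAtMost a s) : ScaleAtLeast (fun N => (a N)⁻¹) (-s) := fun ε hε => by
  have := (h ε hε).inv_rev (by
    filter_upwards [eventually_gt_atTop 0] with N hN h0
    exact absurd h0 (rpow_pos_of_pos (by exact_mod_cast hN) _).ne')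
  refine this.congr (fun N => (abs_inv _).symm) fun N => ?_
  rw [← rpow_neg (Nat.cast_nonneg N)]
  ring_nf

lemma tendsto_abs_atTop (h : ScaleAtMost a s) (hs : s < 0) :
    Tendsto (fun N => |a N|) atTop atTop := by
  have hpow : Tendsto (fun N : ℕ => (N : ℝ) ^ (-s / 2)) atTop atTop :=
    (tendsto_rpow_atTop (by linarith)).comp tendsto_natCast_atTop_atTop
  refine tendsto_atTop_mono' _ ?_ hpow
  filter_upwards [(h (-s / 2) (by linarith)).bound one_pos] with N hN
  rw [one_mul, norm_of_nonneg (rpow_nonneg (Nat.cast_nonneg N) _), norm_eq_abs, abs_abs] at hN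
  rwa [sub_half] at hN

end ScaleAtMost

lemma hasScale_natCast_rpow_neg (s : ℝ) : HasScale (fun N : ℕ => (N : ℝ) ^ (-s)) s := by
  refine ⟨fun ε hε => ?_, fun ε hε => ?_⟩ <;>
    simp only [abs_of_nonneg (rpow_nonneg (Nat.cast_nonneg _) _)] <;>
    exact isLittleO_natCast_rpow_rpow (by linarith)

lemma one_sub_exp_neg_le_rpow {x w : ℝ} (hx : 0 ≤ x) (hw0 : 0 ≤ w) (hw1 : w ≤ 1) :
    1 - exp (-x) ≤ x ^ w := by
  rcases le_or_gt x 1 with hx1 | hx1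
  · calc 1 - exp (-x) ≤ x := by linarith [add_one_le_exp (-x)]
      _ = x ^ (1 : ℝ) := (rpow_one x).symm
      _ ≤ x ^ w := rpow_le_rpow_of_exponent_ge' hx hx1 hw0 hw1
  · calc 1 - exp (-x) ≤ 1 := by linarith [exp_pos (-x)]
      _ ≤ x ^ w := one_le_rpow hx1.le hw0

lemma one_sub_exp_neg_sq_le_rpow {x w : ℝ} (hx : 0 ≤ x) (hw0 : 0 ≤ w) (hw2 : w ≤ 2) :
    (1 - exp (-x)) ^ 2 ≤ x ^ w := by
  have h := one_sub_exp_neg_le_rpow hx (by linarith : 0 ≤ w / 2) (by linarith)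
  calc (1 - exp (-x)) ^ 2 ≤ (x ^ (w / 2)) ^ 2 :=
        pow_le_pow_left₀ (by linarith [exp_le_one_iff.2 (neg_nonpos.2 hx)]) h 2
    _ = x ^ w := by rw [← rpow_natCast, ← rpow_mul hx]; norm_num

lemma exp_neg_le_div_rpow {x p : ℝ} (hx : 0 < x) (hp : 0 < p) : exp (-x) ≤ (p / x) ^ p := by
  have h : (x / p) ^ p ≤ exp x :=
    calc (x / p) ^ p ≤ exp (x / p) ^ p :=
          rpow_le_rpow (by positivity) (by linarith [add_one_le_exp (x / p)]) hp.le
      _ = exp x := by rw [← exp_mul, div_mul_cancel₀ x hp.ne']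
  rw [exp_neg, ← inv_div, inv_rpow (by positivity)]
  exact inv_anti₀ (by positivity) h

lemma integrableOn_mul_rpow_Icc {f : ℝ → ℝ} (hf : Continuous f) {A B : ℝ} (hA : 0 < A)
    (c r : ℝ) : IntegrableOn (fun x => f x * (c * x ^ r)) (Set.Icc A B) :=
  (hf.continuousOn.mul (continuousOn_const.mul (continuousOn_id.rpow_const
    fun _ hx => Or.inl (hA.trans_le hx.1).ne'))).integrableOn_Icc

lemma integral_Icc_rpow {a b r : ℝ} (ha : 0 < a) (hab : a ≤ b) (hr : r ≠ -1) :
    ∫ x in Set.Icc a b, x ^ r = (b ^ (r + 1) - a ^ (r + 1)) / (r + 1) := by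
  rw [integral_Icc_eq_integral_Ioc, ← intervalIntegral.integral_of_le hab]
  exact integral_rpow (Or.inr ⟨hr, Set.notMem_uIcc_of_lt ha (ha.trans_le hab)⟩)

lemma integral_Icc_rpow_le {A r : ℝ} (hA : 0 < A) (hA1 : A ≤ 1) (hr : -1 < r) :
    ∫ x in Set.Icc A 1, x ^ r ≤ 1 / (r + 1) := by
  rw [integral_Icc_rpow hA hA1 hr.ne', one_rpow]
  exact div_le_div_of_nonneg_right (by linarith [rpow_nonneg hA.le (r + 1)]) (by linarith)

lemma ScaleAtLeast.one_sub_exp_neg {x : ℕ → ℝ} {s w : ℝ} (hx : ∀ N, 0 ≤ x N)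
    (h : ScaleAtLeast x s) (hw0 : 0 < w) (hw1 : w ≤ 1) :
    ScaleAtLeast (fun N => 1 - exp (-x N)) (w * s) :=
  (h.rpow hw0).of_abs_le (Eventually.of_forall fun N => by
    rw [abs_of_nonneg (sub_nonneg.2 (exp_le_one_iff.2 (neg_nonpos.2 (hx N)))), abs_of_nonneg (hx N),
      abs_of_nonneg (rpow_nonneg (hx N) w)]
    exact one_sub_exp_neg_le_rpow (hx N) hw0.le hw1)

lemma ScaleAtMost.exp_neg {x : ℕ → ℝ} {s p : ℝ} (hx : ∀ N, 0 < x N) (h : ScaleAtMost x s)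
    (hp : 0 < p) : ScaleAtLeast (fun N => exp (-x N)) (p * -s) :=
  ((h.inv.const_mul p).rpow hp).of_abs_le (Eventually.of_forall fun N => by
    rw [abs_of_pos (exp_pos _), abs_of_nonneg (rpow_nonneg (abs_nonneg _) _),
      abs_of_pos (by have := hx N; positivity), ← div_eq_mul_inv]
    exact exp_neg_le_div_rpow (hx N) hp)

noncomputable def nmnoVariance (ν A : ℝ) (h : ℝ → ℝ) : ℝ :=
  ∫ lam in Set.Icc A 1, (h lam) ^ 2 * (1 / ν * lam ^ (-1 - 1 / ν))

noncomputable def nmnoBias (ν κ A : ℝ) (h : ℝ → ℝ) : ℝ :=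
  ∫ lam in Set.Icc A 1, (1 - h lam) ^ 2 * (1 / ν * lam ^ (κ / ν - 1))

section NMNO

variable {ν κ σ2 A : ℝ} {h : ℝ → ℝ}

lemma nmnoVariance_nonneg (hν : 0 ≤ ν) (hA : 0 ≤ A) : 0 ≤ nmnoVariance ν A h :=
  setIntegral_nonneg measurableSet_Icc fun _ hx =>
    mul_nonneg (sq_nonneg _) (mul_nonneg (one_div_nonneg.2 hν) (rpow_nonneg (hA.trans hx.1) _))

lemma nmnoBias_nonneg (hν : 0 ≤ ν) (hA : 0 ≤ A) : 0 ≤ nmnoBias ν κ A h :=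
  setIntegral_nonneg measurableSet_Icc fun _ hx =>
    mul_nonneg (sq_nonneg _) (mul_nonneg (one_div_nonneg.2 hν) (rpow_nonneg (hA.trans hx.1) _))

lemma nmnoBias_le (hν : 0 < ν) (hκ : 0 < κ) (hA : 0 < A) (hA1 : A ≤ 1) (hh : Continuous h)
    (hh1 : ∀ x, 0 < x → (1 - h x) ^ 2 ≤ 1) : nmnoBias ν κ A h ≤ 1 / κ := by
  calc nmnoBias ν κ A h ≤ ∫ x in Set.Icc A 1, 1 / ν * x ^ (κ / ν - 1) := by
        refine setIntegral_mono_on (integrableOn_mul_rpow_Icc (by fun_prop) hA _ _)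
          (by simpa using
            integrableOn_mul_rpow_Icc (f := fun _ => 1) continuous_const hA (1 / ν) _)
          measurableSet_Icc fun x hx => ?_
        have hx0 : 0 < x := hA.trans_le hx.1
        simpa using mul_le_mul_of_nonneg_right (hh1 x hx0)
          (mul_nonneg (one_div_nonneg.2 hν.le) (rpow_nonneg hx0.le (κ / ν - 1)))
    _ = 1 / ν * ∫ x in Set.Icc A 1, x ^ (κ / ν - 1) := integral_const_mul _ _
    _ ≤ 1 / ν * (1 / (κ / ν - 1 + 1)) :=
        mul_le_mul_of_nonneg_left
          (integral_Icc_rpow_le hA hA1 (by linarith [div_pos hκ hν])) (by positivity)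
    _ = 1 / κ := by
        rw [sub_add_cancel, one_div_div, one_div_mul_eq_div, div_div_cancel_left' hν.ne', one_div]

lemma nmnoVariance_gradientFlow_le {t w : ℝ} (hν : 0 < ν) (ht : 0 ≤ t) (hw : 1 / ν < w)
    (hw2 : w ≤ 2) (hA : 0 < A) (hA1 : A ≤ 1) :
    nmnoVariance ν A (fun lam => 1 - exp (-t * lam)) ≤ t ^ w / (ν * w - 1) := by
  have hw0 : 0 < w := (one_div_pos.2 hν).trans hw
  calc nmnoVariance ν A (fun lam => 1 - exp (-t * lam))
      ≤ ∫ x in Set.Icc A 1, t ^ w / ν * x ^ (w - 1 - 1 / ν) := by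
        refine setIntegral_mono_on (integrableOn_mul_rpow_Icc (by fun_prop) hA _ _)
          (by simpa [mul_assoc] using
            integrableOn_mul_rpow_Icc (f := fun _ => t ^ w / ν) continuous_const hA 1 _)
          measurableSet_Icc fun x hx => ?_
        have hx0 : 0 < x := hA.trans_le hx.1
        have hsq : (1 - exp (-t * x)) ^ 2 ≤ t ^ w * x ^ w := by
          rw [neg_mul, ← mul_rpow ht hx0.le]
          exact one_sub_exp_neg_sq_le_rpow (mul_nonneg ht hx0.le) hw0.le hw2
        calc (1 - exp (-t * x)) ^ 2 * (1 / ν * x ^ (-1 - 1 / ν))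
            ≤ t ^ w * x ^ w * (1 / ν * x ^ (-1 - 1 / ν)) :=
              mul_le_mul_of_nonneg_right hsq
                (mul_nonneg (one_div_nonneg.2 hν.le) (rpow_nonneg hx0.le _))
          _ = t ^ w / ν * x ^ (w - 1 - 1 / ν) := by
              rw [show w - 1 - 1 / ν = w + (-1 - 1 / ν) by ring, rpow_add hx0]
              ring
    _ = t ^ w / ν * ∫ x in Set.Icc A 1, x ^ (w - 1 - 1 / ν) := integral_const_mul _ _
    _ ≤ t ^ w / ν * (1 / (w - 1 - 1 / ν + 1)) :=
        mul_le_mul_of_nonneg_left (integral_Icc_rpow_le hA hA1 (by linarith))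
          (by positivity)
    _ = t ^ w / (ν * w - 1) := by
        have hνw : 0 < ν * w - 1 := by linarith [(div_lt_iff₀' hν).1 hw]
        rw [show w - 1 - 1 / ν + 1 = (ν * w - 1) / ν by field_simp; ring]
        field_simp

lemma le_nmnoVariance_gradientFlow {t : ℝ} (hν : 0 < ν) (ht : 1 ≤ t) (hA : 0 < A)
    (hAt : A ≤ t⁻¹) :
    (1 - exp (-1)) ^ 2 * (t ^ (1 / ν) - 1) ≤
      nmnoVariance ν A (fun lam => 1 - exp (-t * lam)) := by
  have ht0 : 0 < t := one_pos.trans_le ht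
  have hexp : 0 ≤ 1 - exp (-1) := by linarith [exp_le_one_iff.2 (by norm_num : (-1 : ℝ) ≤ 0)]
  calc (1 - exp (-1)) ^ 2 * (t ^ (1 / ν) - 1)
      = (1 - exp (-1)) ^ 2 / ν * ∫ x in Set.Icc t⁻¹ 1, x ^ (-1 - 1 / ν) := by
        rw [integral_Icc_rpow (by positivity) (inv_le_one_of_one_le₀ ht)
          (by linarith [one_div_pos.2 hν]), one_rpow, show -1 - 1 / ν + 1 = -(1 / ν) by ring,
          rpow_neg (inv_nonneg.2 ht0.le), inv_rpow ht0.le, inv_inv]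
        field_simp
        ring
    _ = ∫ x in Set.Icc t⁻¹ 1, (1 - exp (-1)) ^ 2 * (1 / ν * x ^ (-1 - 1 / ν)) := by
        rw [← integral_const_mul]
        congr 1 with x
        ring
    _ ≤ ∫ x in Set.Icc t⁻¹ 1, (1 - exp (-t * x)) ^ 2 * (1 / ν * x ^ (-1 - 1 / ν)) := by
        refine setIntegral_mono_on
          (integrableOn_mul_rpow_Icc continuous_const (by positivity) _ _)
          (integrableOn_mul_rpow_Icc (by fun_prop) (by positivity) _ _)
          measurableSet_Icc fun x hx => ?_
        have hx0 : 0 < x := (inv_pos.2 ht0).trans_le hx.1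
        have htx : 1 ≤ t * x := by
          simpa [mul_inv_cancel₀ ht0.ne'] using mul_le_mul_of_nonneg_left hx.1 ht0.le
        refine mul_le_mul_of_nonneg_right (pow_le_pow_left₀ hexp ?_ 2)
          (mul_nonneg (one_div_nonneg.2 hν.le) (rpow_nonneg hx0.le _))
        rw [neg_mul]
        linarith [exp_le_exp.2 (neg_le_neg htx)]
    _ ≤ nmnoVariance ν A (fun lam => 1 - exp (-t * lam)) :=
        setIntegral_mono_set (integrableOn_mul_rpow_Icc (by fun_prop) hA _ _)
          (ae_restrict_of_forall_mem measurableSet_Icc fun x hx =>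
            mul_nonneg (sq_nonneg _)
              (mul_nonneg (one_div_nonneg.2 hν.le) (rpow_nonneg (hA.le.trans hx.1) _)))
          (Set.Icc_subset_Icc hAt le_rfl).eventuallyLE

lemma natCast_add_one_rpow_neg_mem_Ioc (hν : 0 ≤ ν) (N : ℕ) :
    ((N : ℝ) + 1) ^ (-ν) ∈ Set.Ioc 0 1 :=
  ⟨rpow_pos_of_pos (by positivity) _,
    rpow_le_one_of_one_le_of_nonpos (by simp) (neg_nonpos.2 hν)⟩

/-- `∫ lam in s, f lam + c` parses as `∫ lam in s, (f lam + c)`, so in `nmnoLoss` the bias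
integral sits inside the variance integral. -/
lemma nmnoLoss_eq (hν : 0 ≤ ν) (hh : Continuous h) (N : ℕ) :
    nmnoLoss ν κ σ2 N h = σ2 / (2 * N) * (nmnoVariance ν (((N : ℝ) + 1) ^ (-ν)) h +
      (1 - ((N : ℝ) + 1) ^ (-ν)) * (1 / 2 * nmnoBias ν κ (((N : ℝ) + 1) ^ (-ν)) h)) := by
  obtain ⟨hA, hA1⟩ := natCast_add_one_rpow_neg_mem_Ioc hν N
  rw [nmnoLoss,
    integral_add (integrableOn_mul_rpow_Icc (f := fun x => h x ^ 2) (by fun_prop) hA _ _)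
    (integrableOn_const measure_Icc_lt_top.ne), setIntegral_const, measureReal_def,
    Real.volume_Icc, ENNReal.toReal_ofReal (by linarith), smul_eq_mul]
  rfl

lemma nmnoLoss_nonneg (hν : 0 ≤ ν) (hσ : 0 ≤ σ2) (hh : Continuous h) (N : ℕ) :
    0 ≤ nmnoLoss ν κ σ2 N h := by
  obtain ⟨hA, hA1⟩ := natCast_add_one_rpow_neg_mem_Ioc hν N
  rw [nmnoLoss_eq hν hh]
  exact mul_nonneg (by positivity) (add_nonneg (nmnoVariance_nonneg hν hA.le)
    (mul_nonneg (sub_nonneg.2 hA1) (mul_nonneg (by norm_num) (nmnoBias_nonneg hν hA.le))))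

lemma nmnoLoss_gradientFlow_le {t w : ℝ} (hν : 0 < ν) (hκ : 0 < κ) (hσ : 0 ≤ σ2)
    (ht : 0 ≤ t) (hw : 1 / ν < w) (hw2 : w ≤ 2) (N : ℕ) :
    nmnoLoss ν κ σ2 N (fun lam => 1 - exp (-t * lam)) ≤
      σ2 / (2 * N) * (t ^ w / (ν * w - 1) + 1 / (2 * κ)) := by
  obtain ⟨hA, hA1⟩ := natCast_add_one_rpow_neg_mem_Ioc hν.le N
  have hB := nmnoBias_le (h := fun lam => 1 - exp (-t * lam)) hν hκ hA hA1 (by fun_prop)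
    fun x hx => by
      rw [sub_sub_cancel, neg_mul]
      exact pow_le_one₀ (exp_nonneg _) (exp_le_one_iff.2 (neg_nonpos.2 (mul_nonneg ht hx.le)))
  rw [nmnoLoss_eq hν.le (by fun_prop)]
  refine mul_le_mul_of_nonneg_left
    (add_le_add (nmnoVariance_gradientFlow_le hν ht hw hw2 hA hA1) ?_) (by positivity)
  calc (1 - ((N : ℝ) + 1) ^ (-ν)) * (1 / 2 * nmnoBias ν κ (((N : ℝ) + 1) ^ (-ν)) _)
      ≤ 1 * (1 / 2 * (1 / κ)) :=
        mul_le_mul (by linarith) (by gcongr)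
          (mul_nonneg (by norm_num) (nmnoBias_nonneg hν.le hA.le)) zero_le_one
    _ = 1 / (2 * κ) := by ring

lemma le_nmnoLoss_gradientFlow {t : ℝ} {N : ℕ} (hν : 0 < ν) (hσ : 0 ≤ σ2) (ht : 1 ≤ t)
    (htN : t ≤ ((N : ℝ) + 1) ^ ν) :
    σ2 / (2 * N) * ((1 - exp (-1)) ^ 2 * (t ^ (1 / ν) - 1)) ≤
      nmnoLoss ν κ σ2 N (fun lam => 1 - exp (-t * lam)) := by
  obtain ⟨hA, hA1⟩ := natCast_add_one_rpow_neg_mem_Ioc hν.le N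
  have hAt : ((N : ℝ) + 1) ^ (-ν) ≤ t⁻¹ := by
    rw [rpow_neg (by positivity)]
    exact inv_anti₀ (by linarith) htN
  rw [nmnoLoss_eq hν.le (by fun_prop)]
  exact mul_le_mul_of_nonneg_left
    (le_add_of_le_of_nonneg (le_nmnoVariance_gradientFlow hν ht hA hAt) (mul_nonneg
      (sub_nonneg.2 hA1) (mul_nonneg (by norm_num) (nmnoBias_nonneg hν.le hA.le))))
    (by positivity)

end NMNO

section GradientFlow

variable {ν κ σ2 q : ℝ} {t : ℕ → ℝ}

lemma scaleAtLeast_nmnoLoss_gradientFlow (hν : 1 / 2 < ν) (hκ : 0 < κ) (hσ : 0 ≤ σ2)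
    (hq : 0 < q) (ht_pos : ∀ N, 0 ≤ t N) (ht : ScaleAtLeast t (-q)) :
    ScaleAtLeast (fun N => nmnoLoss ν κ σ2 N (fun lam => 1 - exp (-(t N) * lam)))
      (1 - q / ν) := by
  have hν0 : 0 < ν := by linarith
  refine ScaleAtLeast.of_forall_lt fun r hr => ?_
  set w := min ((1 - r) / q) 2
  have hw : 1 / ν < w := by
    refine lt_min ?_ (by rw [div_lt_iff₀ hν0]; linarith)
    rw [lt_div_iff₀ hq, div_mul_eq_mul_div, one_mul]
    linarith
  have hw0 : 0 < w := (one_div_pos.2 hν0).trans hw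
  have hr1 : r ≤ 1 := by linarith [div_pos hq hν0]
  have hinv := (hasScale_natCast_rpow_neg 1).1
  have hbound : ScaleAtLeast
      (fun N => σ2 / 2 / (ν * w - 1) * ((N : ℝ) ^ (-1 : ℝ) * |t N| ^ w) +
        σ2 / 4 / κ * (N : ℝ) ^ (-1 : ℝ)) r := by
    refine (((hinv.mul (ht.rpow hw0)).const_mul _).mono ?_).add ((hinv.const_mul _).mono hr1)
    have : w * q ≤ 1 - r := (le_div_iff₀ hq).1 (min_le_left _ _)
    linarith
  refine hbound.of_abs_le (Eventually.of_forall fun N => ?_)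
  rw [abs_of_nonneg (nmnoLoss_nonneg hν0.le hσ (by fun_prop) N)]
  refine (nmnoLoss_gradientFlow_le hν0 hκ hσ (ht_pos N) hw (min_le_right _ _) N).trans
    (le_trans (le_of_eq ?_) (le_abs_self _))
  rw [abs_of_nonneg (ht_pos N), rpow_neg_one]
  ring

lemma scaleAtMost_nmnoLoss_gradientFlow (hσ : 0 < σ2) (hq : 0 < q) (hqν : q < ν)
    (ht_pos : ∀ N, 0 < t N) (ht : ScaleAtLeast t (-q)) (ht' : ScaleAtMost t (-q)) :
    ScaleAtMost (fun N => nmnoLoss ν κ σ2 N (fun lam => 1 - exp (-(t N) * lam)))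
      (1 - q / ν) := by
  have hν : 0 < ν := hq.trans hqν
  have hE : 0 < (1 - exp (-1)) ^ 2 := by
    have := exp_lt_one_iff.2 (by norm_num : (-1 : ℝ) < 0)
    positivity
  have hlow : ScaleAtMost (fun N => σ2 * (1 - exp (-1)) ^ 2 / 4 *
      ((N : ℝ) ^ (-1 : ℝ) * |t N| ^ (1 / ν))) (1 - q / ν) := by
    convert ((hasScale_natCast_rpow_neg 1).2.mul (ht'.rpow (one_div_pos.2 hν))).const_mul
      (by positivity : σ2 * (1 - exp (-1)) ^ 2 / 4 ≠ 0) using 1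
    ring
  have htop := ht'.tendsto_abs_atTop (by linarith)
  refine hlow.of_abs_le ?_
  filter_upwards [htop.eventually_ge_atTop 1,
    ((tendsto_rpow_atTop (one_div_pos.2 hν)).comp htop).eventually_ge_atTop 2,
    ht.eventually_abs_le_s8 (r := ν) (by linarith)] with N h1 h2 h3
  simp only [Function.comp_apply, abs_of_pos (ht_pos N)] at h1 h2 h3 ⊢
  have htN : t N ≤ ((N : ℝ) + 1) ^ ν :=
    h3.trans (rpow_le_rpow (Nat.cast_nonneg N) (by linarith) hν.le)
  rw [abs_of_nonneg (by positivity), rpow_neg_one]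
  refine le_trans ?_ ((le_nmnoLoss_gradientFlow hν hσ.le h1 htN).trans (le_abs_self _))
  calc _ = σ2 * (1 - exp (-1)) ^ 2 / (2 * N) * (t N ^ (1 / ν) / 2) := by ring
    _ ≤ σ2 * (1 - exp (-1)) ^ 2 / (2 * N) * (t N ^ (1 / ν) - 1) := by gcongr; linarith
    _ = _ := by ring

end GradientFlow

/-- gradient flow `h_N(λ) = 1 − e^{−t_N λ}` with optimally scaled stopping
time (`1/t_N` of scale `ν/(κ+1)`) attains the optimal NMNO loss scale `κ/(κ+1)`; in
particular `h_N` and `1 − h_N` satisfy the NMNO optimality conditions on every scale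
`s ∈ [0,ν]`, so gradient flow exhibits no saturation for any `ν > 1`, `κ > 0`. -/
theorem gradient_flow_no_saturation (ν κ σ2 : ℝ) (hν : 1 < ν) (hκ : 0 < κ) (hσ : 0 < σ2)
    (t : ℕ → ℝ) (ht_pos : ∀ N, 0 < t N)
    (ht : HasScale (fun N => 1 / t N) (ν / (κ + 1))) :
    HasScale (fun N => nmnoLoss ν κ σ2 N (fun lam => 1 - Real.exp (-(t N) * lam)))
        (κ / (κ + 1)) ∧
    (∀ lam : ℕ → ℝ, (∀ N, lam N ∈ Set.Ioc (0 : ℝ) 1) →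
      ∀ s ∈ Set.Icc (0 : ℝ) ν, HasScale lam s →
        (ν / (κ + 1) ≤ s →
          ScaleAtLeast (fun N => 1 - Real.exp (-(t N) * lam N))
            (1 / 2 * (s / ν - 1 / (κ + 1)))) ∧
        (s ≤ ν / (κ + 1) →
          ScaleAtLeast (fun N => 1 - (1 - Real.exp (-(t N) * lam N)))
            (1 / 2 * (κ / (κ + 1) - κ / ν * s)))) := by
  have hν0 : 0 < ν := by linarith
  have hq : 0 < ν / (κ + 1) := by positivity
  have hqν : ν / (κ + 1) < ν := div_lt_self hν0 (by linarith)
  have hloss_scale : 1 - ν / (κ + 1) / ν = κ / (κ + 1) := by field_simp; ring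
  have ht_le : ScaleAtLeast t (-(ν / (κ + 1))) := by simpa using ht.2.inv
  have ht_ge : ScaleAtMost t (-(ν / (κ + 1))) := by
    simpa using ht.1.inv fun N => (one_div_pos.2 (ht_pos N)).ne'
  refine ⟨hloss_scale ▸ ⟨scaleAtLeast_nmnoLoss_gradientFlow (by linarith) hκ hσ.le hq
      (fun N => (ht_pos N).le) ht_le,
      scaleAtMost_nmnoLoss_gradientFlow hσ hq hqν ht_pos ht_le ht_ge⟩,
    fun lam hlam s _ hlam_s => ⟨fun _ => ?_, fun _ => ?_⟩⟩
  · have := (ht_le.mul hlam_s.1).one_sub_exp_neg (w := 1 / (2 * ν))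
      (fun N => (mul_pos (ht_pos N) (hlam N).1).le) (by positivity)
      (by rw [div_le_one (by positivity)]; linarith)
    simp only [neg_mul]
    convert this using 1
    field_simp
    ring
  · have := (ht_ge.mul hlam_s.2).exp_neg (p := κ / (2 * ν))
      (fun N => mul_pos (ht_pos N) (hlam N).1) (by positivity)
    simp only [sub_sub_cancel, neg_mul]
    convert this using 1
    field_simp
    ring
end

section
/- Assume the power-law circle spectrum λ_l = (|l|+1)^{−ν}, |c_l|² = (|l|+1)^{−κ−1} (l ∈ ℤ), and let a,b ≥ 0 with α = aν + b(κ+1) > 1. Then for all N ≥ 1 and integers k with |k| ≤ N/2 the exact identity [λ_k^a|c_k|^{2b}]_N = λ_k^a|c_k|^{2b} + N^{−α} ( ζ(α, 1+(1+k)/N) + ζ(α, 1+(1−k)/N) ) holds, where ζ(α,x) = Σ_{n≥0}(n+x)^{−α} is the Hurwitz zeta function; consequently [λ_k^a|c_k|^{2b}]_N = λ_k^a|c_k|^{2b} + 2ζ(α) N^{−α} + O(N^{−α−1}) + O(τ² N^{−α}) uniformly over |k| ≤ N/2, where ζ(α) is the Riemann zeta function and τ = (|k|+1)/N. -/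
/-!
Since `λ_l^a |c_l|^{2b} = (|l| + 1)^{-α}`, the `N`-deformation splits into the term `n = 0` and
the two tails `n ≥ 1`, `n ≤ -1`. For `|k| < N` and `n ≥ 1` one has
`|k ± N n| + 1 = N ((n - 1) + 1 + (1 ± k) / N)`, so each tail is `N^{-α}` times a Hurwitz zeta value.

For the expansion write `ζ(α, 1 + t) = Σ_{n ≥ 0} ((n + 1) + t)^{-α}` and Taylor expand every term to
second order at `t = 0`. With `t₁ = (1 + k) / N`, `t₂ = (1 - k) / N` the first-order terms add up to
`-α ζ(α + 1, 1) (t₁ + t₂)` where `t₁ + t₂ = 2 / N`, and the remainders are `O(t₁² + t₂²) = O(τ²)`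
uniformly in `n`, because `t₁, t₂ ≥ -1/2` keeps `n + 1 + t` above `n + 1/2`.
-/

noncomputable section

/-- Power-law kernel eigenvalues on the circle: `λ_l = (|l|+1)^{-ν}`. -/
def plLam (ν : ℝ) (l : ℤ) : ℝ := ((|l| : ℝ) + 1) ^ (-ν)

/-- Power-law squared target coefficients on the circle: `|c_l|² = (|l|+1)^{-κ-1}`. -/
def plCsq (κ : ℝ) (l : ℤ) : ℝ := ((|l| : ℝ) + 1) ^ (-κ - 1)

/-- The quantity `λ_l^a |c_l|^{2b}` for the power-law circle spectrum. -/
def plTerm (ν κ a b : ℝ) (l : ℤ) : ℝ := (plLam ν l) ^ a * (plCsq κ l) ^ b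

/-- The Hurwitz zeta function `ζ(α,x) = Σ_{n≥0} (n+x)^{-α}` (as a real series). -/
def hurwitzZetaSum (α x : ℝ) : ℝ := ∑' n : ℕ, ((n : ℝ) + x) ^ (-α)

lemma summable_nat_add_rpow_neg {α x : ℝ} (hα : 1 < α) (hx : 0 < x) :
    Summable fun n : ℕ => ((n : ℝ) + x) ^ (-α) := by
  refine ((Real.summable_one_div_nat_add_rpow x α).mpr hα).congr fun n => ?_
  rw [abs_of_pos (by positivity), Real.rpow_neg (by positivity), one_div]

lemma hasSum_hurwitzZetaSum {α x : ℝ} (hα : 1 < α) (hx : 0 < x) :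
    HasSum (fun n : ℕ => ((n : ℝ) + x) ^ (-α)) (hurwitzZetaSum α x) :=
  (summable_nat_add_rpow_neg hα hx).hasSum

lemma hurwitzZetaSum_pos {α x : ℝ} (hα : 1 < α) (hx : 0 < x) : 0 < hurwitzZetaSum α x :=
  (summable_nat_add_rpow_neg hα hx).tsum_pos (fun n => by positivity) 0 (by positivity)

lemma plTerm_eq (ν κ a b : ℝ) (l : ℤ) :
    plTerm ν κ a b l = ((|l| : ℝ) + 1) ^ (-(a * ν + b * (κ + 1))) := by
  have hl : (0 : ℝ) < |(l : ℝ)| + 1 := by positivity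
  rw [plTerm, plLam, plCsq, ← Real.rpow_mul hl.le, ← Real.rpow_mul hl.le, ← Real.rpow_add hl]
  ring_nf

lemma one_add_one_add_div_pos {N x : ℝ} (hN : 0 < N) (hx : -N < x) : 0 < 1 + (1 + x) / N := by
  rw [one_add_div hN.ne']
  exact div_pos (by linarith) hN

lemma rpow_abs_add_mul_succ_eq {α N x : ℝ} (hN : 0 < N) (hx : -N < x) (n : ℕ) :
    (|x + N * (n + 1)| + 1) ^ (-α) = N ^ (-α) * ((n : ℝ) + (1 + (1 + x) / N)) ^ (-α) := by
  have hxN : x + N * (n + 1) + 1 = N * (n + (1 + (1 + x) / N)) := by field_simp; ring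
  rw [abs_of_pos (by nlinarith [n.cast_nonneg (α := ℝ)]), hxN,
    Real.mul_rpow hN.le (by linarith [one_add_one_add_div_pos hN hx, n.cast_nonneg (α := ℝ)])]

theorem tsum_rpow_abs_add_mul_eq_hurwitz {α : ℝ} (hα : 1 < α) {N : ℕ} {k : ℤ}
    (hk : |k| < N) :
    ∑' n : ℤ, ((|k + (N : ℤ) * n| : ℝ) + 1) ^ (-α) =
      ((|k| : ℝ) + 1) ^ (-α) + (N : ℝ) ^ (-α) *
        (hurwitzZetaSum α (1 + (1 + (k : ℝ)) / N) + hurwitzZetaSum α (1 + (1 - (k : ℝ)) / N)) := by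
  have hkR : |(k : ℝ)| < N := by exact_mod_cast hk
  obtain ⟨hk₁, hk₂⟩ := abs_lt.mp hkR
  have hN : (0 : ℝ) < N := by linarith [abs_nonneg (k : ℝ)]
  set f : ℤ → ℝ := fun n => ((|k + (N : ℤ) * n| : ℝ) + 1) ^ (-α) with hf
  have hpos : HasSum (fun n : ℕ => f (n + 1))
      ((N : ℝ) ^ (-α) * hurwitzZetaSum α (1 + (1 + (k : ℝ)) / N)) := by
    simp only [hf]
    push_cast
    simp_rw [rpow_abs_add_mul_succ_eq hN hk₁]
    exact (hasSum_hurwitzZetaSum hα (one_add_one_add_div_pos hN hk₁)).mul_left _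
  have hneg : HasSum (fun n : ℕ => f (-(n + 1)))
      ((N : ℝ) ^ (-α) * hurwitzZetaSum α (1 + (1 - (k : ℝ)) / N)) := by
    have hsymm : ∀ n : ℕ, |(k : ℝ) + N * -((n : ℝ) + 1)| = |-(k : ℝ) + N * (n + 1)| :=
      fun n => by rw [← abs_neg]; ring_nf
    have hk₂' : -(N : ℝ) < -k := neg_lt_neg hk₂
    simp only [hf]
    push_cast
    simp_rw [hsymm, rpow_abs_add_mul_succ_eq hN hk₂', ← sub_eq_add_neg]
    have hx := one_add_one_add_div_pos hN hk₂'
    rw [← sub_eq_add_neg] at hx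
    exact (hasSum_hurwitzZetaSum hα hx).mul_left _
  rw [(hpos.of_add_one_of_neg_add_one hneg).tsum_eq, hf]
  simp only [Int.cast_zero, mul_zero, add_zero]
  ring

lemma le_add_of_mem_uIcc {c d s t : ℝ} (hdc : d ≤ c) (hdt : d ≤ c + t)
    (hs : s ∈ Set.uIcc 0 t) : d ≤ c + s := by
  rcases Set.mem_uIcc.mp hs with ⟨h₀, -⟩ | ⟨h₀, -⟩ <;> linarith

lemma hasDerivAt_add_rpow {c q s : ℝ} (hs : 0 < c + s) :
    HasDerivAt (fun s => (c + s) ^ q) (q * (c + s) ^ (q - 1)) s := by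
  simpa using ((hasDerivAt_id s).const_add c).rpow_const (p := q) (Or.inl hs.ne')

section RpowTaylor

variable {p c d t : ℝ}

lemma abs_rpow_neg_sub_le (hp : 0 ≤ p) (hd : 0 < d) (hdc : d ≤ c) (hdt : d ≤ c + t) :
    |(c + t) ^ (-p) - c ^ (-p)| ≤ p * d ^ (-(p + 1)) * |t| := by
  have hmvt := (convex_uIcc 0 t).norm_image_sub_le_of_norm_hasDerivWithin_le
    (f := fun s => (c + s) ^ (-p)) (C := p * d ^ (-(p + 1)))
    (fun s hs => (hasDerivAt_add_rpow (hd.trans_le (le_add_of_mem_uIcc hdc hdt hs))).hasDerivWithinAt)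
    (fun s hs => ?_) Set.left_mem_uIcc Set.right_mem_uIcc
  · simpa using hmvt
  · have hcs := le_add_of_mem_uIcc hdc hdt hs
    rw [Real.norm_eq_abs, abs_mul, abs_neg, abs_of_nonneg hp,
      abs_of_pos (Real.rpow_pos_of_pos (hd.trans_le hcs) _), show -p - 1 = -(p + 1) by ring]
    exact mul_le_mul_of_nonneg_left (Real.rpow_le_rpow_of_nonpos hd hcs (by linarith)) hp

lemma abs_rpow_neg_sub_add_le (hp : 0 ≤ p) (hd : 0 < d) (hdc : d ≤ c) (hdt : d ≤ c + t) :
    |(c + t) ^ (-p) - c ^ (-p) + p * c ^ (-(p + 1)) * t| ≤ p * (p + 1) * d ^ (-(p + 2)) * t ^ 2 := by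
  have hmvt := (convex_uIcc 0 t).norm_image_sub_le_of_norm_hasDerivWithin_le
    (f := fun s => (c + s) ^ (-p) + p * c ^ (-(p + 1)) * s)
    (f' := fun s => -p * (c + s) ^ (-p - 1) + p * c ^ (-(p + 1)))
    (C := p * (p + 1) * d ^ (-(p + 2)) * |t|)
    (fun s hs => ?_) (fun s hs => ?_) Set.left_mem_uIcc Set.right_mem_uIcc
  · simp only [Real.norm_eq_abs, add_zero, mul_zero, sub_zero] at hmvt
    rw [← sq_abs t, sq, ← mul_assoc]
    convert hmvt using 2
    ring
  · have hcs := hd.trans_le (le_add_of_mem_uIcc hdc hdt hs)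
    exact ((hasDerivAt_add_rpow hcs).add
      ((hasDerivAt_id s).const_mul (p * c ^ (-(p + 1)))) |>.congr_deriv (by simp)).hasDerivWithinAt
  · have hlip := abs_rpow_neg_sub_le (by linarith : 0 ≤ p + 1) hd hdc (le_add_of_mem_uIcc hdc hdt hs)
    rw [show p + 1 + 1 = p + 2 by ring] at hlip
    calc ‖-p * (c + s) ^ (-p - 1) + p * c ^ (-(p + 1))‖
        = p * |(c + s) ^ (-(p + 1)) - c ^ (-(p + 1))| := by
          rw [Real.norm_eq_abs, show -p * (c + s) ^ (-p - 1) + p * c ^ (-(p + 1))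
              = p * -((c + s) ^ (-(p + 1)) - c ^ (-(p + 1))) by ring_nf, abs_mul, abs_neg,
            abs_of_nonneg hp]
      _ ≤ p * ((p + 1) * d ^ (-(p + 2)) * |t|) := by
          refine mul_le_mul_of_nonneg_left (hlip.trans ?_) hp
          exact mul_le_mul_of_nonneg_left (by simpa using Set.abs_sub_left_of_mem_uIcc hs)
            (mul_nonneg (by linarith) (Real.rpow_nonneg hd.le _))
      _ = p * (p + 1) * d ^ (-(p + 2)) * |t| := by ring

lemma abs_rpow_neg_second_diff_le {t₁ t₂ : ℝ} (hp : 0 ≤ p) (hd : 0 < d) (hdc : d ≤ c)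
    (ht₁ : d ≤ c + t₁) (ht₂ : d ≤ c + t₂) :
    |(c + t₁) ^ (-p) + (c + t₂) ^ (-p) - 2 * c ^ (-p)| ≤
      p * c ^ (-(p + 1)) * |t₁ + t₂| + p * (p + 1) * d ^ (-(p + 2)) * (t₁ ^ 2 + t₂ ^ 2) := by
  have hsplit : (c + t₁) ^ (-p) + (c + t₂) ^ (-p) - 2 * c ^ (-p) =
      ((c + t₁) ^ (-p) - c ^ (-p) + p * c ^ (-(p + 1)) * t₁) +
      ((c + t₂) ^ (-p) - c ^ (-p) + p * c ^ (-(p + 1)) * t₂) -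
      p * c ^ (-(p + 1)) * (t₁ + t₂) := by ring
  have hlin : |p * c ^ (-(p + 1)) * (t₁ + t₂)| = p * c ^ (-(p + 1)) * |t₁ + t₂| := by
    rw [abs_mul, abs_of_nonneg (mul_nonneg hp (Real.rpow_nonneg (hd.le.trans hdc) _))]
  rw [hsplit]
  refine (abs_sub _ _).trans ?_
  rw [hlin]
  have h₁ := abs_rpow_neg_sub_add_le hp hd hdc ht₁
  have h₂ := abs_rpow_neg_sub_add_le hp hd hdc ht₂
  linarith [abs_add_le ((c + t₁) ^ (-p) - c ^ (-p) + p * c ^ (-(p + 1)) * t₁)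
    ((c + t₂) ^ (-p) - c ^ (-p) + p * c ^ (-(p + 1)) * t₂)]

end RpowTaylor

theorem abs_hurwitzZetaSum_second_diff_le {α t₁ t₂ : ℝ} (hα : 1 < α)
    (ht₁ : -(1 / 2) ≤ t₁) (ht₂ : -(1 / 2) ≤ t₂) :
    |hurwitzZetaSum α (1 + t₁) + hurwitzZetaSum α (1 + t₂) - 2 * hurwitzZetaSum α 1| ≤
      α * hurwitzZetaSum (α + 1) 1 * |t₁ + t₂| +
        α * (α + 1) * hurwitzZetaSum (α + 2) (1 / 2) * (t₁ ^ 2 + t₂ ^ 2) := by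
  have hlhs := ((hasSum_hurwitzZetaSum hα (by linarith : 0 < 1 + t₁)).add
    (hasSum_hurwitzZetaSum hα (by linarith : 0 < 1 + t₂))).sub
    ((hasSum_hurwitzZetaSum hα one_pos).mul_left 2)
  have hrhs := (((hasSum_hurwitzZetaSum (by linarith : 1 < α + 1) one_pos).mul_left α).mul_right
    |t₁ + t₂|).add (((hasSum_hurwitzZetaSum (by linarith : 1 < α + 2) one_half_pos).mul_left
      (α * (α + 1))).mul_right (t₁ ^ 2 + t₂ ^ 2))
  have hterm : ∀ n : ℕ, |((n : ℝ) + (1 + t₁)) ^ (-α) + ((n : ℝ) + (1 + t₂)) ^ (-α) -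
      2 * ((n : ℝ) + 1) ^ (-α)| ≤
      α * ((n : ℝ) + 1) ^ (-(α + 1)) * |t₁ + t₂| +
        α * (α + 1) * ((n : ℝ) + 1 / 2) ^ (-(α + 2)) * (t₁ ^ 2 + t₂ ^ 2) := fun n => by
    have hn := n.cast_nonneg (α := ℝ)
    simp only [← add_assoc]
    exact abs_rpow_neg_second_diff_le (c := n + 1) (d := n + 1 / 2) (by linarith) (by positivity)
      (by linarith) (by linarith) (by linarith)
  exact abs_le.mpr ⟨hasSum_le (fun n => by linarith [(abs_le.mp (hterm n)).1]) hrhs.neg hlhs,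
    hasSum_le (fun n => (abs_le.mp (hterm n)).2) hlhs hrhs⟩

lemma sq_one_add_div_add_sq_one_sub_div_le (k N : ℝ) :
    ((1 + k) / N) ^ 2 + ((1 - k) / N) ^ 2 ≤ 2 * ((|k| + 1) / N) ^ 2 := by
  simp only [div_pow, ← add_div, mul_div_assoc']
  gcongr
  nlinarith [abs_nonneg k, sq_abs k, le_abs_self k, neg_abs_le k]

theorem abs_hurwitzZetaSum_deformation_sub_le {α N k : ℝ} (hα : 1 < α) (hN : 0 < N)
    (hk : 2 * |k| ≤ N) :
    |hurwitzZetaSum α (1 + (1 + k) / N) + hurwitzZetaSum α (1 + (1 - k) / N) -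
        2 * hurwitzZetaSum α 1| ≤
      2 * (α * hurwitzZetaSum (α + 1) 1) / N +
        2 * (α * (α + 1) * hurwitzZetaSum (α + 2) (1 / 2)) * ((|k| + 1) / N) ^ 2 := by
  have ht₁ : -(1 / 2) ≤ (1 + k) / N := by
    rw [le_div_iff₀ hN]; linarith [neg_abs_le k]
  have ht₂ : -(1 / 2) ≤ (1 - k) / N := by
    rw [le_div_iff₀ hN]; linarith [le_abs_self k]
  have hsum : |(1 + k) / N + (1 - k) / N| = 2 / N := by
    rw [← add_div, show 1 + k + (1 - k) = 2 by ring, abs_of_pos (div_pos two_pos hN)]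
  have hB : 0 ≤ α * (α + 1) * hurwitzZetaSum (α + 2) (1 / 2) :=
    mul_nonneg (by nlinarith) (hurwitzZetaSum_pos (by linarith) one_half_pos).le
  refine (abs_hurwitzZetaSum_second_diff_le hα ht₁ ht₂).trans ?_
  rw [hsum]
  linear_combination mul_le_mul_of_nonneg_left (sq_one_add_div_add_sq_one_sub_div_le k N) hB

lemma tsum_plTerm_add_mul_eq {ν κ a b α : ℝ} (hα : α = a * ν + b * (κ + 1)) (hα1 : 1 < α)
    {N : ℕ} {k : ℤ} (hk : |k| < N) :
    ∑' n : ℤ, plTerm ν κ a b (k + (N : ℤ) * n) =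
      plTerm ν κ a b k + (N : ℝ) ^ (-α) *
        (hurwitzZetaSum α (1 + (1 + (k : ℝ)) / N) + hurwitzZetaSum α (1 + (1 - (k : ℝ)) / N)) := by
  simp only [plTerm_eq, ← hα]
  push_cast
  exact tsum_rpow_abs_add_mul_eq_hurwitz hα1 hk

theorem ndeformation_hurwitz_general (ν κ a b α : ℝ)
    (hα : α = a * ν + b * (κ + 1)) (hα1 : 1 < α) :
    (∀ N : ℕ, 1 ≤ N → ∀ k : ℤ, 2 * |k| ≤ (N : ℤ) →
      (∑' n : ℤ, plTerm ν κ a b (k + (N : ℤ) * n)) =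
        plTerm ν κ a b k + (N : ℝ) ^ (-α) *
          (hurwitzZetaSum α (1 + (1 + (k : ℝ)) / N) +
           hurwitzZetaSum α (1 + (1 - (k : ℝ)) / N))) ∧
    ∃ C : ℝ, 0 < C ∧ ∀ N : ℕ, 1 ≤ N → ∀ k : ℤ, 2 * |k| ≤ (N : ℤ) →
      |(∑' n : ℤ, plTerm ν κ a b (k + (N : ℤ) * n)) - plTerm ν κ a b k -
          2 * hurwitzZetaSum α 1 * (N : ℝ) ^ (-α)| ≤
        C * ((N : ℝ) ^ (-α - 1) + (((|k| : ℝ) + 1) / N) ^ 2 * (N : ℝ) ^ (-α)) := by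
  set A := α * hurwitzZetaSum (α + 1) 1
  set B := α * (α + 1) * hurwitzZetaSum (α + 2) (1 / 2)
  have hA : 0 < A := mul_pos (by linarith) (hurwitzZetaSum_pos (by linarith) one_pos)
  have hB : 0 < B := mul_pos (by nlinarith) (hurwitzZetaSum_pos (by linarith) one_half_pos)
  refine ⟨fun N _ k hk => tsum_plTerm_add_mul_eq hα hα1 (by omega), 2 * (A + B), by linarith,
    fun N hN k hk => ?_⟩
  have hNR : (0 : ℝ) < N := by exact_mod_cast hN
  have hscale (x : ℝ) : |(N : ℝ) ^ (-α) * x| = (N : ℝ) ^ (-α) * |x| := by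
    rw [abs_mul, abs_of_pos (Real.rpow_pos_of_pos hNR _)]
  set τ := ((|k| : ℝ) + 1) / N
  rw [tsum_plTerm_add_mul_eq hα hα1 (by omega), Real.rpow_sub_one hNR.ne']
  calc _ = (N : ℝ) ^ (-α) * |hurwitzZetaSum α (1 + (1 + (k : ℝ)) / N) +
        hurwitzZetaSum α (1 + (1 - (k : ℝ)) / N) - 2 * hurwitzZetaSum α 1| := by
        rw [← hscale]
        ring_nf
    _ ≤ (N : ℝ) ^ (-α) * (2 * A / N + 2 * B * τ ^ 2) := by
        gcongr
        exact abs_hurwitzZetaSum_deformation_sub_le hα1 hNR (by exact_mod_cast hk)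
    _ = 2 * A * ((N : ℝ) ^ (-α) / N) + 2 * B * (τ ^ 2 * (N : ℝ) ^ (-α)) := by ring
    _ ≤ 2 * (A + B) * ((N : ℝ) ^ (-α) / N + τ ^ 2 * (N : ℝ) ^ (-α)) := by
        have hX : 0 ≤ (N : ℝ) ^ (-α) / N := by positivity
        have hY : 0 ≤ τ ^ 2 * (N : ℝ) ^ (-α) := by positivity
        linear_combination 2 * mul_nonneg hA.le hY + 2 * mul_nonneg hB.le hX

/-- exact Hurwitz-zeta representation of the `N`-deformation for the
power-law circle spectrum, and the resulting expansion
`[λ_k^a|c_k|^{2b}]_N = λ_k^a|c_k|^{2b} + 2ζ(α)N^{-α} + O(N^{-α-1}) + O(τ²N^{-α})`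
uniformly over `|k| ≤ N/2`, where `ζ(α) = ζ(α,1)` is the Riemann zeta value and
`τ = (|k|+1)/N`. -/
theorem ndeformation_hurwitz (ν κ a b α : ℝ)
    (hν : 1 < ν) (hκ : 0 < κ) (ha : 0 ≤ a) (hb : 0 ≤ b)
    (hα : α = a * ν + b * (κ + 1)) (hα1 : 1 < α) :
    (∀ N : ℕ, 1 ≤ N → ∀ k : ℤ, 2 * |k| ≤ (N : ℤ) →
      (∑' n : ℤ, plTerm ν κ a b (k + (N : ℤ) * n)) =
        plTerm ν κ a b k + (N : ℝ) ^ (-α) *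
          (hurwitzZetaSum α (1 + (1 + (k : ℝ)) / N) +
           hurwitzZetaSum α (1 + (1 - (k : ℝ)) / N))) ∧
    ∃ C : ℝ, 0 < C ∧ ∀ N : ℕ, 1 ≤ N → ∀ k : ℤ, 2 * |k| ≤ (N : ℤ) →
      |(∑' n : ℤ, plTerm ν κ a b (k + (N : ℤ) * n)) - plTerm ν κ a b k -
          2 * hurwitzZetaSum α 1 * (N : ℝ) ^ (-α)| ≤
        C * ((N : ℝ) ^ (-α - 1) + (((|k| : ℝ) + 1) / N) ^ 2 * (N : ℝ) ^ (-α)) :=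
  ndeformation_hurwitz_general ν κ a b α hα hα1

end
end

section
/- Let a ∈ (−1,2) with a ∉ {0,1}, and for x > 0 define F_a(x) = ∫_0^1 λ^a/(λ + x) dλ. Then as x → 0⁺, F_a(x) = −(π/ sin(π a)) x^a + 1/a + x/(1−a) + O(x²). -/
open Real Filter Asymptotics MeasureTheory Set Topology

/-!
For `-1 < a < 0` the integral over the whole half-line is a Beta integral: scaling `t = x s` and
substituting `u = s / (1 + s)` turns it into `B(a + 1, -a) x ^ a = -(π / sin (π a)) x ^ a`.
The identity `t ^ a / (t + x) = t ^ (a - 1) - x t ^ (a - 1) / (t + x)`, applied twice on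
`(1, ∞)`, shows that the tail over `(1, ∞)` is `-1/a + x/(a - 1)` up to `x²` times a bounded
integral. On `(0, 1]` the same identity gives `F_a(x) = 1/a - x F_{a-1}(x)`, and the expansion
satisfies this recurrence up to `x² / (2 - a)`, which carries the estimate from `(-1, 0)` to
`(0, 1)` and then to `(1, 2)`.
-/

theorem integral_rpow_mul_one_sub_rpow {u v : ℝ} (hu : 0 < u) (hv : 0 < v) :
    ∫ t in (0 : ℝ)..1, t ^ (u - 1) * (1 - t) ^ (v - 1) = Gamma u * Gamma v / Gamma (u + v) := by
  apply Complex.ofReal_injective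
  rw [← intervalIntegral.integral_ofReal]
  push_cast
  rw [← Complex.Gamma_ofReal, ← Complex.Gamma_ofReal, ← Complex.Gamma_ofReal, Complex.ofReal_add,
    ← Complex.betaIntegral_eq_Gamma_mul_div _ _ (by simpa) (by simpa), Complex.betaIntegral]
  refine intervalIntegral.integral_congr fun t ht => ?_
  rw [uIcc_of_le zero_le_one] at ht
  rw [Complex.ofReal_cpow ht.1, Complex.ofReal_cpow (sub_nonneg.2 ht.2)]
  push_cast
  rfl

theorem integral_Ioi_rpow_div_one_add_rpow {u v : ℝ} (hu : 0 < u) (hv : 0 < v) :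
    ∫ t in Ioi (0 : ℝ), t ^ (u - 1) / (1 + t) ^ (u + v) = Gamma u * Gamma v / Gamma (u + v) := by
  have himage : (fun t : ℝ => t / (1 + t)) '' Ioi 0 = Ioo 0 1 := by
    ext s
    refine ⟨?_, fun ⟨hs0, hs1⟩ => ⟨s / (1 - s), div_pos hs0 (by linarith), ?_⟩⟩
    · rintro ⟨t, ht, rfl⟩
      have ht : (0 : ℝ) < t := ht
      exact ⟨by positivity, (div_lt_one (by linarith)).2 (by linarith)⟩
    · have : 1 - s ≠ 0 := by linarith
      field_simp
      ring
  have hderiv : ∀ t ∈ Ioi (0 : ℝ),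
      HasDerivWithinAt (fun t => t / (1 + t)) ((1 + t) ^ 2)⁻¹ (Ioi 0) t := by
    intro t ht
    have ht : (0 : ℝ) < t := ht
    have h : HasDerivAt (fun t => t / (1 + t)) ((1 + t) ^ 2)⁻¹ t :=
      ((hasDerivAt_id' t).fun_div ((hasDerivAt_id' t).const_add 1) (by linarith)).congr_deriv
        (by field_simp; ring)
    exact h.hasDerivWithinAt
  have hinj : InjOn (fun t : ℝ => t / (1 + t)) (Ioi 0) := by
    intro t ht s hs hts
    have ht : (0 : ℝ) < t := ht
    have hs : (0 : ℝ) < s := hs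
    field_simp at hts
    linarith
  rw [← integral_rpow_mul_one_sub_rpow hu hv, intervalIntegral.integral_of_le zero_le_one,
    integral_Ioc_eq_integral_Ioo, ← himage,
    integral_image_eq_integral_abs_deriv_smul measurableSet_Ioi hderiv hinj]
  refine setIntegral_congr_fun measurableSet_Ioi fun t ht => ?_
  have ht : (0 : ℝ) < t := ht
  have h1t : (0 : ℝ) < 1 + t := by linarith
  have hsub : 1 - t / (1 + t) = (1 + t)⁻¹ := by field_simp; ring
  have hpow : (1 + t) ^ (u + v) = (1 + t) ^ 2 * (1 + t) ^ (u - 1) * (1 + t) ^ (v - 1) := by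
    rw [← rpow_natCast, ← rpow_add h1t, ← rpow_add h1t]
    congr 1
    push_cast
    ring
  simp only [smul_eq_mul]
  rw [abs_of_pos (by positivity), hsub, div_rpow ht.le h1t.le, inv_rpow h1t.le, hpow]
  field_simp

theorem integral_Ioi_rpow_div_one_add {b : ℝ} (hb₀ : 0 < b) (hb₁ : b < 1) :
    ∫ t in Ioi (0 : ℝ), t ^ (b - 1) / (1 + t) = π / sin (π * b) := by
  have h := integral_Ioi_rpow_div_one_add_rpow hb₀ (sub_pos.2 hb₁)
  simpa only [add_sub_cancel, rpow_one, Gamma_one, div_one, Gamma_mul_Gamma_one_sub] using h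

theorem integral_Ioi_rpow_div_add {a x : ℝ} (ha₁ : -1 < a) (ha₀ : a < 0) (hx : 0 < x) :
    ∫ t in Ioi (0 : ℝ), t ^ a / (t + x) = -(π / sin (π * a)) * x ^ a := by
  have hscale : ∀ s ∈ Ioi (0 : ℝ), (x * s) ^ a / (x * s + x) = x ^ (a - 1) * (s ^ a / (1 + s)) := by
    intro s hs
    rw [mul_rpow hx.le (le_of_lt hs), rpow_sub_one hx.ne']
    field_simp
    ring
  have h := integral_comp_mul_left_Ioi (fun t => t ^ a / (t + x)) 0 hx
  rw [mul_zero, setIntegral_congr_fun measurableSet_Ioi hscale, integral_const_mul,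
    ← add_sub_cancel_right a 1, integral_Ioi_rpow_div_one_add (by linarith) (by linarith),
    add_sub_cancel_right, smul_eq_mul, eq_inv_mul_iff_mul_eq₀ hx.ne'] at h
  rw [← h, mul_add, mul_one, sin_add_pi, ← mul_assoc, ← rpow_one_add' hx.le (by linarith)]
  ring_nf

theorem integrableOn_Ioc_rpow_div_add {a c x : ℝ} (ha : -1 < a) (hx : 0 < x) :
    IntegrableOn (fun t => t ^ a / (t + x)) (Ioc 0 c) := by
  have hpow : IntegrableOn (fun t : ℝ => t ^ a) (Ioc 0 c) :=
    intervalIntegral.intervalIntegrable_rpow' ha |>.1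
  refine (hpow.div_const x).mono'
    (by fun_prop : Measurable fun t : ℝ => t ^ a / (t + x)).aestronglyMeasurable ?_
  filter_upwards [ae_restrict_mem measurableSet_Ioc] with t ht
  have ht : 0 < t := ht.1
  rw [norm_of_nonneg (by positivity)]
  gcongr
  linarith

theorem integrableOn_Ioi_rpow_div_add {a c x : ℝ} (ha : a < 0) (hc : 0 < c) (hx : 0 ≤ x) :
    IntegrableOn (fun t => t ^ a / (t + x)) (Ioi c) := by
  refine (integrableOn_Ioi_rpow_of_lt (by linarith : a - 1 < -1) hc).mono'
    (by fun_prop : Measurable fun t : ℝ => t ^ a / (t + x)).aestronglyMeasurable ?_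
  filter_upwards [ae_restrict_mem measurableSet_Ioi] with t ht
  have ht : 0 < t := hc.trans ht
  rw [norm_of_nonneg (by positivity), rpow_sub_one ht.ne']
  gcongr
  linarith

theorem setIntegral_rpow_div_add {s : Set ℝ} {a x : ℝ} (hs : MeasurableSet s) (hs₀ : s ⊆ Ioi 0)
    (hx : 0 ≤ x) (h₁ : IntegrableOn (fun t => t ^ (a - 1)) s)
    (h₂ : IntegrableOn (fun t => t ^ (a - 1) / (t + x)) s) :
    ∫ t in s, t ^ a / (t + x) = (∫ t in s, t ^ (a - 1)) - x * ∫ t in s, t ^ (a - 1) / (t + x) := by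
  rw [← integral_const_mul, ← integral_sub h₁ (h₂.const_mul x)]
  refine setIntegral_congr_fun hs fun t ht => ?_
  have ht : 0 < t := hs₀ ht
  rw [rpow_sub_one ht.ne']
  field_simp
  ring

theorem integral_Ioi_one_rpow_div_add {a x : ℝ} (ha : a < 0) (hx : 0 ≤ x) :
    ∫ t in Ioi (1 : ℝ), t ^ a / (t + x)
      = -1 / a + x / (a - 1) + x ^ 2 * ∫ t in Ioi (1 : ℝ), t ^ (a - 2) / (t + x) := by
  have hrec : ∀ b : ℝ, b < 0 → ∫ t in Ioi (1 : ℝ), t ^ b / (t + x)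
      = -1 / b - x * ∫ t in Ioi (1 : ℝ), t ^ (b - 1) / (t + x) := by
    intro b hb
    rw [setIntegral_rpow_div_add measurableSet_Ioi (Ioi_subset_Ioi zero_le_one) hx
      (integrableOn_Ioi_rpow_of_lt (by linarith) one_pos)
      (integrableOn_Ioi_rpow_div_add (by linarith) one_pos hx),
      integral_Ioi_rpow_of_lt (by linarith) one_pos, one_rpow, sub_add_cancel]
  rw [hrec a ha, hrec (a - 1) (by linarith), sub_sub, one_add_one_eq_two]
  ring

theorem abs_integral_Ioi_one_rpow_div_add_le {b x : ℝ} (hb : b < 0) (hx : 0 ≤ x) :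
    |∫ t in Ioi (1 : ℝ), t ^ b / (t + x)| ≤ -1 / b := by
  have hbound : ∀ t ∈ Ioi (1 : ℝ), t ^ b / (t + x) ≤ t ^ (b - 1) := by
    intro t ht
    have ht : 0 < t := zero_lt_one.trans ht
    rw [rpow_sub_one ht.ne']
    gcongr
    linarith
  rw [abs_of_nonneg (setIntegral_nonneg measurableSet_Ioi fun t ht => ?_)]
  · calc ∫ t in Ioi (1 : ℝ), t ^ b / (t + x)
        ≤ ∫ t in Ioi (1 : ℝ), t ^ (b - 1) :=
          setIntegral_mono_on (integrableOn_Ioi_rpow_div_add hb one_pos hx)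
            (integrableOn_Ioi_rpow_of_lt (by linarith) one_pos) measurableSet_Ioi hbound
      _ = -1 / b := by
          rw [integral_Ioi_rpow_of_lt (by linarith) one_pos, one_rpow, sub_add_cancel]
  · have ht : 0 < t := zero_lt_one.trans ht
    positivity

noncomputable def powerlawIntegral (a x : ℝ) : ℝ :=
  ∫ t in Ioc (0 : ℝ) 1, t ^ a / (t + x)

noncomputable def powerlawExpansion (a x : ℝ) : ℝ :=
  -(π / sin (π * a)) * x ^ a + 1 / a + x / (1 - a)

theorem powerlawIntegral_eq_one_div_sub {a x : ℝ} (ha : 0 < a) (hx : 0 < x) :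
    powerlawIntegral a x = 1 / a - x * powerlawIntegral (a - 1) x := by
  have hpow : ∫ t in Ioc (0 : ℝ) 1, t ^ (a - 1) = 1 / a := by
    rw [← intervalIntegral.integral_of_le zero_le_one, integral_rpow (Or.inl (by linarith)),
      sub_add_cancel, one_rpow, zero_rpow ha.ne', sub_zero]
  rw [powerlawIntegral, powerlawIntegral,
    setIntegral_rpow_div_add measurableSet_Ioc (fun t ht => ht.1) hx.le
    (intervalIntegral.intervalIntegrable_rpow' (by linarith)).1
    (integrableOn_Ioc_rpow_div_add (by linarith) hx), hpow]

theorem powerlawExpansion_eq_one_div_sub (a : ℝ) {x : ℝ} (hx : 0 < x) :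
    powerlawExpansion a x = 1 / a - x * powerlawExpansion (a - 1) x + x ^ 2 / (2 - a) := by
  rw [powerlawExpansion, powerlawExpansion, show π * (a - 1) = π * a - π by ring, sin_sub_pi,
    rpow_sub_one hx.ne', show 1 - (a - 1) = 2 - a by ring, ← neg_sub a 1, div_neg]
  field_simp
  ring

theorem powerlawIntegral_sub_powerlawExpansion_of_neg {a x : ℝ} (ha₁ : -1 < a) (ha₀ : a < 0)
    (hx : 0 < x) :
    powerlawIntegral a x - powerlawExpansion a x
      = -x ^ 2 * ∫ t in Ioi (1 : ℝ), t ^ (a - 2) / (t + x) := by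
  have hsplit := setIntegral_union (Ioc_disjoint_Ioi le_rfl) measurableSet_Ioi
    (integrableOn_Ioc_rpow_div_add ha₁ hx (c := 1))
    (integrableOn_Ioi_rpow_div_add ha₀ one_pos hx.le)
  rw [Ioc_union_Ioi_eq_Ioi zero_le_one, integral_Ioi_rpow_div_add ha₁ ha₀ hx,
    integral_Ioi_one_rpow_div_add ha₀ hx.le] at hsplit
  rw [powerlawIntegral, powerlawExpansion, ← neg_sub a 1, div_neg]
  linear_combination -hsplit

theorem isBigO_powerlawIntegral_sub_powerlawExpansion_of_neg {a : ℝ} (ha₁ : -1 < a) (ha₀ : a < 0) :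
    (fun x => powerlawIntegral a x - powerlawExpansion a x) =O[𝓝[>] 0] fun x => x ^ 2 := by
  refine IsBigO.of_bound (-1 / (a - 2)) ?_
  filter_upwards [self_mem_nhdsWithin] with x (hx : 0 < x)
  rw [powerlawIntegral_sub_powerlawExpansion_of_neg ha₁ ha₀ hx, norm_mul, norm_neg, mul_comm]
  exact mul_le_mul_of_nonneg_right
    (abs_integral_Ioi_one_rpow_div_add_le (by linarith) hx.le) (norm_nonneg _)

theorem Asymptotics.IsBigO.powerlawIntegral_sub_powerlawExpansion {a : ℝ} (ha : 0 < a)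
    (h : (fun x => powerlawIntegral (a - 1) x - powerlawExpansion (a - 1) x) =O[𝓝[>] 0]
      fun x => x ^ 2) :
    (fun x => powerlawIntegral a x - powerlawExpansion a x) =O[𝓝[>] 0] fun x => x ^ 2 := by
  have hrec : (fun x => -x * (powerlawIntegral (a - 1) x - powerlawExpansion (a - 1) x)
      - (2 - a)⁻¹ * x ^ 2) =ᶠ[𝓝[>] 0] fun x => powerlawIntegral a x - powerlawExpansion a x := by
    filter_upwards [self_mem_nhdsWithin] with x (hx : 0 < x)
    rw [powerlawIntegral_eq_one_div_sub ha hx, powerlawExpansion_eq_one_div_sub a hx]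
    ring
  have hbdd : (fun x : ℝ => -x) =O[𝓝[>] 0] fun _ => (1 : ℝ) :=
    ((continuous_neg.tendsto' 0 0 neg_zero).mono_left nhdsWithin_le_nhds).isBigO_one ℝ
  have hprod := hbdd.mul h
  simp only [one_mul] at hprod
  exact (hprod.sub ((isBigO_refl _ _).const_mul_left _)).congr' hrec EventuallyEq.rfl

/-- asymptotic expansion of `F_a(x) = ∫_0^1 λ^a/(λ+x) dλ` as `x → 0⁺`:
`F_a(x) = −(π/sin(πa)) x^a + 1/a + x/(1−a) + O(x²)` for `a ∈ (−1,2)`, `a ∉ {0,1}`. -/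
theorem powerlaw_integral_asymptotics (a : ℝ)
    (ha₁ : -1 < a) (ha₂ : a < 2) (ha0 : a ≠ 0) (ha1 : a ≠ 1) :
    (fun x : ℝ =>
        (∫ lam in Set.Ioc (0 : ℝ) 1, lam ^ a / (lam + x)) -
          (-(π / Real.sin (π * a)) * x ^ a + 1 / a + x / (1 - a)))
      =O[nhdsWithin 0 (Set.Ioi 0)] fun x : ℝ => x ^ 2 := by
  change (fun x => powerlawIntegral a x - powerlawExpansion a x) =O[𝓝[>] 0] fun x => x ^ 2
  rcases ha0.lt_or_gt with hneg | hpos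
  · exact isBigO_powerlawIntegral_sub_powerlawExpansion_of_neg ha₁ hneg
  rcases ha1.lt_or_gt with hlt | hgt
  · exact (isBigO_powerlawIntegral_sub_powerlawExpansion_of_neg (by linarith) (by linarith))
      |>.powerlawIntegral_sub_powerlawExpansion hpos
  · exact (isBigO_powerlawIntegral_sub_powerlawExpansion_of_neg (a := a - 1 - 1) (by linarith)
      (by linarith) |>.powerlawIntegral_sub_powerlawExpansion (by linarith))
      |>.powerlawIntegral_sub_powerlawExpansion hpos
end
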